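/- arXiv:1811.06662 — 7 statements merged into one kernel-verified Lean document; each statement's English description precedes it below -/
import Mathlib

section
/- Moon's theorem. Let n ≥ 1 and let x : Fin n → ℝ be monotone increasing. Then there exists a win-probability matrix p of size n whose mean score sequence is x if and only if ∑_{i=0}^{k−1} x i ≥ k(k−1)/2 for every 1 ≤ k ≤ n, with equality for k = n (i.e. x is majorized by (0,1,…,n−1)). -/
/-!
A set `T` of teams plays `(#T).choose 2` games among themselves, each worth one expected win in
total, so `∑ i ∈ T, x i ≥ (#T).choose 2`, with equality when `T` contains every team. Conversely,
induct on the set of teams. A tight proper nonempty subset `T` may beat everybody else, and then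
`T` and its complement (with scores lowered by `#T`) are scheduled separately. To produce a tight
set, move score from one team to another, in either direction, until some set separating them
becomes tight: `x` is a convex combination of the two resulting score vectors, and mean score
vectors form a convex set. For monotone `x` the prefix of length `k` has the least sum among
`k`-sets, so the prefix conditions imply those for all subsets.
-/

/-- A win-probability matrix of size `n`: entries in `[0,1]` with
`p i j + p j i = 1` for `i ≠ j`. -/
def IsWinProbMatrix {n : ℕ} (p : Fin n → Fin n → ℝ) : Prop :=
  (∀ i j, 0 ≤ p i j ∧ p i j ≤ 1) ∧ ∀ i j, i ≠ j → p i j + p j i = 1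

/-- Mean score sequence of a win-probability matrix. -/
def meanScore {n : ℕ} (p : Fin n → Fin n → ℝ) (i : Fin n) : ℝ :=
  ∑ j ∈ Finset.univ.filter (fun j => j ≠ i), p i j

open Finset

theorem Nat.cast_add_choose_two (a b : ℕ) :
    ((a + b).choose 2 : ℝ) = a.choose 2 + b.choose 2 + a * b := by
  simp only [Nat.cast_choose_two]; push_cast; ring

theorem Nat.cast_mul_sub_one_div_two (k : ℕ) : ((k * (k - 1) : ℕ) : ℝ) / 2 = k.choose 2 := by
  rw [Nat.cast_choose_two]
  cases k <;> simp

theorem Finset.sum_le_sum_of_card_eq {ι M : Type*} [DecidableEq ι] [AddCommMonoid M]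
    [PartialOrder M] [IsOrderedAddMonoid M] {s t : Finset ι} {f : ι → M} (c : M)
    (hst : #s = #t) (hs : ∀ i ∈ s \ t, f i ≤ c) (ht : ∀ i ∈ t \ s, c ≤ f i) :
    ∑ i ∈ s, f i ≤ ∑ i ∈ t, f i :=
  calc ∑ i ∈ s, f i
      ≤ ∑ i ∈ s ∩ t, f i + #(s \ t) • c := by
        rw [← sum_inter_add_sum_sdiff s t]
        gcongr
        exact sum_le_card_nsmul _ _ _ hs
    _ = ∑ i ∈ t ∩ s, f i + #(t \ s) • c := by rw [inter_comm, card_sdiff_comm hst]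
    _ ≤ ∑ i ∈ t, f i := by
        rw [← sum_inter_add_sum_sdiff t s]
        gcongr
        exact card_nsmul_le_sum _ _ _ ht

namespace Tournament

variable {ι : Type*} [DecidableEq ι]

def IsWinProbOn (S : Finset ι) (p : ι → ι → ℝ) : Prop :=
  ∀ i ∈ S, ∀ j ∈ S, 0 ≤ p i j ∧ p i j ≤ 1 ∧ (i ≠ j → p i j + p j i = 1)

def scoreOn (S : Finset ι) (p : ι → ι → ℝ) (i : ι) : ℝ :=
  ∑ j ∈ S.erase i, p i j

def IsMeanScoreOn (S : Finset ι) (x : ι → ℝ) : Prop :=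
  ∃ p, IsWinProbOn S p ∧ ∀ i ∈ S, scoreOn S p i = x i

/-- Landau's condition, over all subsets instead of the prefixes of the sorted sequence. -/
def LandauCondition (S : Finset ι) (x : ι → ℝ) : Prop :=
  (∀ T ⊆ S, ((#T).choose 2 : ℝ) ≤ ∑ i ∈ T, x i) ∧ ∑ i ∈ S, x i = (#S).choose 2

theorem sum_scoreOn {S : Finset ι} {p : ι → ι → ℝ}
    (hp : ∀ i ∈ S, ∀ j ∈ S, i ≠ j → p i j + p j i = 1) :
    ∑ i ∈ S, scoreOn S p i = (#S).choose 2 := by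
  induction S using Finset.induction_on with
  | empty => simp
  | insert a S ha ih =>
    have hS := ih fun i hi j hj => hp i (mem_insert_of_mem hi) j (mem_insert_of_mem hj)
    have hrow : ∀ i ∈ S, scoreOn (insert a S) p i = p i a + scoreOn S p i := fun i hi => by
      rw [scoreOn, erase_insert_of_ne (ne_of_mem_of_not_mem hi ha).symm,
        sum_insert (mt mem_of_mem_erase ha), scoreOn]
    have hpairs : ∑ j ∈ S, (p a j + p j a) = #S := by
      rw [sum_congr rfl fun j hj => hp a (mem_insert_self a S) j (mem_insert_of_mem hj)
        (ne_of_mem_of_not_mem hj ha).symm]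
      simp
    rw [sum_insert ha, sum_congr rfl hrow, sum_add_distrib, hS, card_insert_of_notMem ha,
      Nat.cast_add_choose_two, scoreOn, erase_insert ha, ← hpairs, sum_add_distrib]
    simp only [Nat.choose_succ_self, Nat.cast_zero, Nat.cast_one, add_zero, mul_one]
    ring

theorem IsMeanScoreOn.landauCondition {S : Finset ι} {x : ι → ℝ} (h : IsMeanScoreOn S x) :
    LandauCondition S x := by
  obtain ⟨p, hp, hpx⟩ := h
  have hpairs : ∀ T ⊆ S, ∑ i ∈ T, scoreOn T p i = (#T).choose 2 := fun T hT =>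
    sum_scoreOn fun i hi j hj => (hp i (hT hi) j (hT hj)).2.2
  refine ⟨fun T hT => ?_, ?_⟩
  · rw [← hpairs T hT]
    refine sum_le_sum fun i hi => ?_
    rw [← hpx i (hT hi)]
    exact sum_le_sum_of_subset_of_nonneg (erase_subset_erase i hT) fun j hj _ =>
      (hp i (hT hi) j (mem_of_mem_erase hj)).1
  · rw [← hpairs S subset_rfl]
    exact sum_congr rfl fun i hi => (hpx i hi).symm

theorem convex_setOf_isMeanScoreOn (S : Finset ι) : Convex ℝ {x : ι → ℝ | IsMeanScoreOn S x} := by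
  rintro y ⟨p, hp, hpy⟩ z ⟨q, hq, hqz⟩ a b ha hb hab
  refine ⟨a • p + b • q, fun i hi j hj => ?_, fun i hi => ?_⟩
  · obtain ⟨hp0, hp1, hpij⟩ := hp i hi j hj
    obtain ⟨hq0, hq1, hqij⟩ := hq i hi j hj
    simp only [Pi.add_apply, Pi.smul_apply, smul_eq_mul]
    refine ⟨by positivity, by nlinarith, fun hij => ?_⟩
    linear_combination a * hpij hij + b * hqij hij + hab
  · simp [scoreOn, sum_add_distrib, ← mul_sum, ← hpy i hi, ← hqz i hi]

/-- The teams of `T` win all their games against `S \ T`. -/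
theorem IsMeanScoreOn.of_sdiff {S T : Finset ι} {x : ι → ℝ} (hTS : T ⊆ S)
    (hT : IsMeanScoreOn T x) (hST : IsMeanScoreOn (S \ T) fun i => x i - #T) :
    IsMeanScoreOn S x := by
  obtain ⟨p, hp, hpx⟩ := hT
  obtain ⟨q, hq, hqx⟩ := hST
  let r : ι → ι → ℝ := fun i j =>
    if i ∈ T then (if j ∈ T then p i j else 0) else (if j ∈ T then 1 else q i j)
  refine ⟨r, fun i hi j hj => ?_, fun i hi => ?_⟩
  · by_cases hiT : i ∈ T <;> by_cases hjT : j ∈ T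
    · simpa [r, hiT, hjT] using hp i hiT j hjT
    · simp [r, hiT, hjT]
    · simp [r, hiT, hjT]
    · simpa [r, hiT, hjT] using hq i (mem_sdiff.2 ⟨hi, hiT⟩) j (mem_sdiff.2 ⟨hj, hjT⟩)
  · rw [scoreOn, sum_erase_eq_sub hi, ← sum_sdiff hTS]
    by_cases hiT : i ∈ T
    · rw [← hpx i hiT, scoreOn, sum_erase_eq_sub hiT, sum_eq_zero fun j hj => ?_]
      · simp [r, hiT, sum_ite_mem]
      · simp [r, hiT, (mem_sdiff.1 hj).2]
    · have hiST : i ∈ S \ T := mem_sdiff.2 ⟨hi, hiT⟩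
      have := hqx i hiST
      rw [scoreOn, sum_erase_eq_sub hiST] at this
      have hrow : ∀ j ∈ S \ T, r i j = q i j := fun j hj => by simp [r, hiT, (mem_sdiff.1 hj).2]
      have hbeat : ∑ j ∈ T, r i j = #T := by simp +contextual [r, hiT]
      rw [sum_congr rfl hrow, hbeat]
      simp only [r, hiT, if_false] at this ⊢
      linarith

theorem LandauCondition.sdiff {S T : Finset ι} {x : ι → ℝ} (hx : LandauCondition S x)
    (hTS : T ⊆ S) (hT : ∑ i ∈ T, x i = (#T).choose 2) :
    LandauCondition (S \ T) fun i => x i - #T := by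
  refine ⟨fun U hU => ?_, ?_⟩
  · have hUT : Disjoint U T := disjoint_of_subset_left hU disjoint_sdiff_self_left
    have := hx.1 (U ∪ T) (union_subset (hU.trans sdiff_subset) hTS)
    rw [card_union_of_disjoint hUT, sum_union hUT, Nat.cast_add_choose_two, hT] at this
    simp only [sum_sub_distrib, sum_const, nsmul_eq_mul]
    linarith
  · have hS := hx.2
    rw [← card_sdiff_add_card_eq_card hTS, Nat.cast_add_choose_two, ← sum_sdiff hTS, hT] at hS
    simp only [sum_sub_distrib, sum_const, nsmul_eq_mul]
    linarith

def transfer (x : ι → ℝ) (ε : ℝ) (i₀ i₁ : ι) : ι → ℝ :=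
  x + ε • (Pi.single i₁ 1 - Pi.single i₀ 1)

@[simp]
theorem transfer_zero (x : ι → ℝ) (i₀ i₁ : ι) : transfer x 0 i₀ i₁ = x := by
  simp [transfer]

theorem sum_transfer (U : Finset ι) (x : ι → ℝ) (ε : ℝ) (i₀ i₁ : ι) :
    ∑ i ∈ U, transfer x ε i₀ i₁ i =
      ∑ i ∈ U, x i + ε * ((if i₁ ∈ U then 1 else 0) - (if i₀ ∈ U then 1 else 0)) := by
  simp [transfer, sum_add_distrib, ← mul_sum, sum_sub_distrib, sum_pi_single']

/-- `ε` is the least slack `∑ i ∈ T, x i - (#T).choose 2` of a set `T` containing `i₀` but not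
`i₁`. -/
theorem LandauCondition.exists_tight_transfer {S : Finset ι} {x : ι → ℝ}
    (hx : LandauCondition S x) {i₀ i₁ : ι} (hi₀ : i₀ ∈ S) (hi₁ : i₁ ∈ S) (hne : i₀ ≠ i₁) :
    ∃ ε ≥ (0 : ℝ), ∃ T ⊆ S, i₀ ∈ T ∧ i₁ ∉ T ∧
      LandauCondition S (transfer x ε i₀ i₁) ∧
      ∑ i ∈ T, transfer x ε i₀ i₁ i = (#T).choose 2 := by
  let slack : Finset ι → ℝ := fun T => ∑ i ∈ T, x i - (#T).choose 2
  obtain ⟨T, hT, hTmin⟩ := exists_min_image {T ∈ S.powerset | i₀ ∈ T ∧ i₁ ∉ T} slack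
    ⟨{i₀}, by simp [hi₀, hne.symm]⟩
  simp only [mem_filter, mem_powerset] at hT hTmin
  have hslack : 0 ≤ slack T := sub_nonneg.2 (hx.1 T hT.1)
  refine ⟨slack T, hslack, T, hT.1, hT.2.1, hT.2.2, ⟨fun U hU => ?_, ?_⟩, ?_⟩
  · rw [sum_transfer]
    have hU' := hx.1 U hU
    by_cases h₀ : i₀ ∈ U <;> by_cases h₁ : i₁ ∈ U
    · simpa [h₀, h₁] using hU'
    · have := hTmin U ⟨hU, h₀, h₁⟩
      simp only [h₀, h₁, if_true, if_false, slack] at this ⊢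
      linarith
    · simp only [h₀, h₁, if_true, if_false]
      linarith
    · simpa [h₀, h₁] using hU'
  · simpa [sum_transfer, hi₀, hi₁] using hx.2
  · rw [sum_transfer]
    simp only [hT.2.1, hT.2.2, if_true, if_false, slack]
    ring

theorem LandauCondition.isMeanScoreOn {S : Finset ι} {x : ι → ℝ} (hx : LandauCondition S x) :
    IsMeanScoreOn S x := by
  induction S using Finset.strongInduction generalizing x with
  | H S ih =>
  have of_tight : ∀ y T, LandauCondition S y → T ⊆ S → ∀ i₀ ∈ T, ∀ i₁ ∈ S, i₁ ∉ T →
      ∑ i ∈ T, y i = (#T).choose 2 → IsMeanScoreOn S y := by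
    intro y T hy hTS i₀ hi₀ i₁ hi₁ hi₁T hT
    refine IsMeanScoreOn.of_sdiff hTS (ih T ?_ ⟨fun U hU => hy.1 U (hU.trans hTS), hT⟩)
      (ih _ (sdiff_ssubset hTS ⟨i₀, hi₀⟩) (hy.sdiff hTS hT))
    exact (ssubset_iff_of_subset hTS).2 ⟨i₁, hi₁, hi₁T⟩
  rcases le_or_gt #S 1 with hS | hS
  · refine ⟨0, fun i hi j hj => by simp [card_le_one.1 hS i hi j hj], fun i hi => ?_⟩
    obtain rfl : S = {i} :=
      eq_singleton_iff_unique_mem.2 ⟨hi, fun j hj => card_le_one.1 hS j hj i hi⟩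
    simpa [scoreOn] using hx.2.symm
  obtain ⟨i₀, i₁, hi₀, hi₁, hne⟩ := one_lt_card_iff.1 hS
  obtain ⟨εa, hεa, Ta, hTaS, hi₀a, hi₁a, hxa, hTa⟩ := hx.exists_tight_transfer hi₀ hi₁ hne
  obtain ⟨εb, hεb, Tb, hTbS, hi₁b, hi₀b, hxb, hTb⟩ := hx.exists_tight_transfer hi₁ hi₀ hne.symm
  have ha := of_tight _ Ta hxa hTaS i₀ hi₀a i₁ hi₁ hi₁a hTa
  have hb := of_tight _ Tb hxb hTbS i₁ hi₁b i₀ hi₀ hi₀b hTb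
  rcases hεa.eq_or_lt with rfl | hεa
  · simpa using ha
  have hsum : 0 < εa + εb := by linarith
  have hx_eq : x = (εb / (εa + εb)) • transfer x εa i₀ i₁ +
      (εa / (εa + εb)) • transfer x εb i₁ i₀ := by
    ext i
    simp only [transfer, Pi.add_apply, Pi.smul_apply, Pi.sub_apply, smul_eq_mul]
    field_simp
    ring
  rw [hx_eq]
  exact convex_setOf_isMeanScoreOn S ha hb (by positivity) (by positivity)
    (by rw [← add_div, add_comm, div_self hsum.ne'])

theorem isMeanScoreOn_iff_landauCondition {S : Finset ι} {x : ι → ℝ} :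
    IsMeanScoreOn S x ↔ LandauCondition S x :=
  ⟨IsMeanScoreOn.landauCondition, LandauCondition.isMeanScoreOn⟩

theorem landauCondition_univ_iff_of_monotone {n : ℕ} {x : Fin n → ℝ} (hx : Monotone x) :
    LandauCondition univ x ↔
      (∀ k : ℕ, 1 ≤ k → k ≤ n →
        ((k * (k - 1) : ℕ) : ℝ) / 2 ≤ ∑ i ∈ univ.filter (fun i : Fin n => (i : ℕ) < k), x i) ∧
      ∑ i, x i = ((n * (n - 1) : ℕ) : ℝ) / 2 := by
  have hprefix : ∀ k ≤ n, #(univ.filter fun i : Fin n => (i : ℕ) < k) = k := fun k hk => by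
    rw [Fin.card_filter_val_lt, min_eq_right hk]
  simp only [LandauCondition, subset_univ, true_imp_iff, card_univ, Fintype.card_fin,
    Nat.cast_mul_sub_one_div_two]
  refine and_congr_left fun _ => ⟨fun h k _ hk => ?_, fun h T => ?_⟩
  · simpa only [hprefix k hk] using h (univ.filter fun i : Fin n => (i : ℕ) < k)
  obtain ⟨k, hTk⟩ : ∃ k, #T = k := ⟨_, rfl⟩
  rcases Nat.eq_zero_or_pos k with rfl | hk0
  · simp [card_eq_zero.1 hTk]
  have hkn : k ≤ n := hTk ▸ by simpa using card_le_univ T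
  rw [hTk]
  refine (h k hk0 hkn).trans (sum_le_sum_of_card_eq (x ⟨k - 1, by omega⟩)
    ((hprefix k hkn).trans hTk.symm) (fun i hi => hx ?_) fun i hi => hx ?_)
  all_goals
    simp only [mem_sdiff, mem_filter, mem_univ, true_and, Fin.le_def] at hi ⊢
    omega

theorem isMeanScoreOn_univ_iff {n : ℕ} {x : Fin n → ℝ} :
    IsMeanScoreOn univ x ↔ ∃ p, IsWinProbMatrix p ∧ ∀ i, meanScore p i = x i := by
  simp only [IsMeanScoreOn, IsWinProbOn, scoreOn, IsWinProbMatrix, meanScore, filter_ne',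
    mem_univ, true_implies]
  exact exists_congr fun p => and_congr_left' ⟨fun h => ⟨fun i j => ⟨(h i j).1, (h i j).2.1⟩,
    fun i j => (h i j).2.2⟩, fun h i j => ⟨(h.1 i j).1, (h.1 i j).2, h.2 i j⟩⟩

end Tournament

theorem moon_theorem_general (n : ℕ) (x : Fin n → ℝ) (hx : Monotone x) :
    (∃ p : Fin n → Fin n → ℝ, IsWinProbMatrix p ∧ ∀ i, meanScore p i = x i) ↔
    ((∀ k : ℕ, 1 ≤ k → k ≤ n →
        ((k * (k - 1) : ℕ) : ℝ) / 2 ≤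
          ∑ i ∈ Finset.univ.filter (fun i : Fin n => (i : ℕ) < k), x i) ∧
      ∑ i, x i = ((n * (n - 1) : ℕ) : ℝ) / 2) := by
  rw [← Tournament.isMeanScoreOn_univ_iff,
    ← Tournament.landauCondition_univ_iff_of_monotone hx]
  exact Tournament.isMeanScoreOn_iff_landauCondition

/-- Moon's theorem: a monotone `x` is the mean score sequence of some
win-probability matrix iff `x` is majorized by `(0,1,…,n-1)`. -/
theorem moon_theorem (n : ℕ) (hn : 1 ≤ n) (x : Fin n → ℝ) (hx : Monotone x) :
    (∃ p : Fin n → Fin n → ℝ, IsWinProbMatrix p ∧ ∀ i, meanScore p i = x i) ↔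
    ((∀ k : ℕ, 1 ≤ k → k ≤ n →
        ((k * (k - 1) : ℕ) : ℝ) / 2 ≤
          ∑ i ∈ Finset.univ.filter (fun i : Fin n => (i : ℕ) < k), x i) ∧
      ∑ i, x i = ((n * (n - 1) : ℕ) : ℝ) / 2) :=
  moon_theorem_general n x hx
end

section
/- If p is a win-probability matrix of size n with mean score sequence x, then for every convex function φ : ℝ → ℝ one has ∑_{i=0}^{n−1} φ(x i) ≤ ∑_{i=0}^{n−1} φ(i). -/
open Finset

section Aux

/-- Endpoint lemma: moving mass between two coordinates, convexity pushes to an endpoint. -/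
lemma slide_le_max {φ : ℝ → ℝ} (hφ : ConvexOn ℝ Set.univ φ)
    (u v α β : ℝ) (hα : 0 ≤ α) (hβ : 0 ≤ β) :
    φ u + φ v ≤ max (φ (u - α) + φ (v + α)) (φ (u + β) + φ (v - β)) := by
  rcases eq_or_lt_of_le (add_nonneg hα hβ) with h | h
  · have hα0 : α = 0 := by linarith
    have hβ0 : β = 0 := by linarith
    simp [hα0, hβ0]
  · set lam := β / (α + β) with hlamdef
    set mu := α / (α + β) with hmudef
    have hsum : lam + mu = 1 := by
      rw [hlamdef, hmudef, ← add_div, add_comm β α, div_self h.ne']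
    have hlam : 0 ≤ lam := div_nonneg hβ h.le
    have hmu : 0 ≤ mu := div_nonneg hα h.le
    have h1 : φ u ≤ lam * φ (u - α) + mu * φ (u + β) := by
      have heq : lam • (u - α) + mu • (u + β) = u := by
        simp only [smul_eq_mul, hlamdef, hmudef]
        field_simp
        ring
      have := hφ.2 (Set.mem_univ (u - α)) (Set.mem_univ (u + β)) hlam hmu hsum
      rw [heq] at this
      simpa using this
    have h2 : φ v ≤ lam * φ (v + α) + mu * φ (v - β) := by
      have heq : lam • (v + α) + mu • (v - β) = v := by
        simp only [smul_eq_mul, hlamdef, hmudef]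
        field_simp
        ring
      have := hφ.2 (Set.mem_univ (v + α)) (Set.mem_univ (v - β)) hlam hmu hsum
      rw [heq] at this
      simpa using this
    have hA : φ (u - α) + φ (v + α) ≤ max (φ (u - α) + φ (v + α)) (φ (u + β) + φ (v - β)) :=
      le_max_left _ _
    have hB : φ (u + β) + φ (v - β) ≤ max (φ (u - α) + φ (v + α)) (φ (u + β) + φ (v - β)) :=
      le_max_right _ _
    calc φ u + φ v ≤ lam * (φ (u - α) + φ (v + α)) + mu * (φ (u + β) + φ (v - β)) := by
          linarith [h1, h2]
      _ ≤ lam * max (φ (u - α) + φ (v + α)) (φ (u + β) + φ (v - β))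
            + mu * max (φ (u - α) + φ (v + α)) (φ (u + β) + φ (v - β)) := by
          gcongr
      _ = max (φ (u - α) + φ (v + α)) (φ (u + β) + φ (v - β)) := by
          rw [← add_mul, hsum, one_mul]

/-- Midpoint convexity consequence used for tie-flipping. -/
lemma two_mul_le {φ : ℝ → ℝ} (hφ : ConvexOn ℝ Set.univ φ) (s : ℝ) :
    2 * φ s ≤ φ (s - 1) + φ (s + 1) := by
  have h12 : (0:ℝ) ≤ (1:ℝ)/2 := by norm_num
  have hsum : (1:ℝ)/2 + 1/2 = 1 := by norm_num
  have := hφ.2 (Set.mem_univ (s - 1)) (Set.mem_univ (s + 1)) h12 h12 hsum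
  have heq : ((1:ℝ)/2) • (s - 1) + ((1:ℝ)/2) • (s + 1) = s := by
    simp only [smul_eq_mul]; ring
  rw [heq] at this
  simp only [smul_eq_mul] at this
  linarith

/-- The two-entry modification of a matrix. -/
def flip2 {n : ℕ} (p : Fin n → Fin n → ℝ) (i j : Fin n) (c : ℝ) :
    Fin n → Fin n → ℝ :=
  fun a b => if a = i ∧ b = j then c else if a = j ∧ b = i then 1 - c else p a b

variable {n : ℕ} {p : Fin n → Fin n → ℝ} {i j : Fin n} {c : ℝ}

lemma flip2_ij : flip2 p i j c i j = c := by simp [flip2]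

lemma flip2_ji (hij : i ≠ j) : flip2 p i j c j i = 1 - c := by
  simp [flip2, hij, hij.symm]

lemma flip2_other {a b : Fin n} (h1 : ¬(a = i ∧ b = j)) (h2 : ¬(a = j ∧ b = i)) :
    flip2 p i j c a b = p a b := by simp [flip2, h1, h2]

/-- If only the entry in column `j` of row `i` may change, the mean score changes
by the change of that entry. -/
lemma meanScore_shift (q : Fin n → Fin n → ℝ) (hji : j ≠ i)
    (h : ∀ b, b ≠ j → q i b = p i b) :
    meanScore q i = meanScore p i + (q i j - p i j) := by
  unfold meanScore
  have hj : j ∈ Finset.univ.filter (fun b => b ≠ i) := by simp [hji]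
  rw [← Finset.add_sum_erase _ _ hj, ← Finset.add_sum_erase _ _ hj]
  have htail : ∑ b ∈ (Finset.univ.filter (fun b => b ≠ i)).erase j, q i b
      = ∑ b ∈ (Finset.univ.filter (fun b => b ≠ i)).erase j, p i b :=
    Finset.sum_congr rfl fun b hb => h b (Finset.mem_erase.1 hb).1
  rw [htail]; ring

lemma meanScore_flip2_i (hij : i ≠ j) :
    meanScore (flip2 p i j c) i = meanScore p i + (c - p i j) := by
  have := meanScore_shift (p := p) (flip2 p i j c) hij.symm (fun b hb => by
    apply flip2_other
    · rintro ⟨-, rfl⟩; exact hb rfl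
    · rintro ⟨rfl, -⟩; exact hij rfl)
  rw [this, flip2_ij]

lemma meanScore_flip2_j (hij : i ≠ j) :
    meanScore (flip2 p i j c) j = meanScore p j + ((1 - c) - p j i) := by
  have := meanScore_shift (p := p) (flip2 p i j c) hij (fun b hb => by
    apply flip2_other
    · rintro ⟨rfl, -⟩; exact hij rfl
    · rintro ⟨-, rfl⟩; exact hb rfl)
  rw [this, flip2_ji hij]

lemma meanScore_flip2_other {k : Fin n} (hki : k ≠ i) (hkj : k ≠ j) :
    meanScore (flip2 p i j c) k = meanScore p k := by
  unfold meanScore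
  refine Finset.sum_congr rfl fun b _ => flip2_other ?_ ?_
  · rintro ⟨rfl, -⟩; exact hki rfl
  · rintro ⟨rfl, -⟩; exact hkj rfl

lemma isWinProbMatrix_flip2 (hp : IsWinProbMatrix p) (hij : i ≠ j)
    (hc0 : 0 ≤ c) (hc1 : c ≤ 1) : IsWinProbMatrix (flip2 p i j c) := by
  constructor
  · intro a b
    unfold flip2
    split_ifs with h1 h2
    · exact ⟨hc0, hc1⟩
    · constructor <;> linarith
    · exact hp.1 a b
  · intro a b hab
    by_cases h1 : a = i ∧ b = j
    · obtain ⟨rfl, rfl⟩ := h1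
      rw [flip2_ij, flip2_ji hij]; ring
    · by_cases h2 : a = j ∧ b = i
      · obtain ⟨rfl, rfl⟩ := h2
        rw [flip2_ji hij, flip2_ij]; ring
      · rw [flip2_other h1 h2, flip2_other (by tauto) (by tauto)]
        exact hp.2 a b hab

/-- Splitting a sum whose terms differ from another only at two places. -/
lemma sum_two_diff (f g : Fin n → ℝ) (hij : i ≠ j)
    (h : ∀ k, k ≠ i → k ≠ j → f k = g k) :
    ∑ k, f k = ∑ k, g k + (f i - g i) + (f j - g j) := by
  have hi : i ∈ (Finset.univ : Finset (Fin n)) := Finset.mem_univ i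
  have hj : j ∈ Finset.univ.erase i := by simp [hij.symm]
  have split : ∀ F : Fin n → ℝ,
      ∑ k, F k = F i + (F j + ∑ k ∈ (Finset.univ.erase i).erase j, F k) := by
    intro F
    rw [← Finset.add_sum_erase _ _ hi, ← Finset.add_sum_erase _ _ hj]
  rw [split f, split g]
  have : ∑ k ∈ (Finset.univ.erase i).erase j, f k
      = ∑ k ∈ (Finset.univ.erase i).erase j, g k := by
    refine Finset.sum_congr rfl fun k hk => ?_
    simp only [Finset.mem_erase] at hk
    exact h k hk.2.1 hk.1
  rw [this]; ring

lemma meanScore_nonneg (hp : IsWinProbMatrix p) (i : Fin n) :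
    0 ≤ meanScore p i :=
  Finset.sum_nonneg fun j _ => (hp.1 i j).1

lemma meanScore_le (hp : IsWinProbMatrix p) (i : Fin n) :
    meanScore p i ≤ (n : ℝ) - 1 := by
  have h1 : meanScore p i ≤ ∑ _j ∈ Finset.univ.filter (fun j => j ≠ i), (1:ℝ) :=
    Finset.sum_le_sum fun j _ => (hp.1 i j).2
  have h2 : (Finset.univ.filter (fun j => j ≠ i)) = Finset.univ.erase i :=
    Finset.filter_ne' Finset.univ i
  have hn : 1 ≤ n := i.pos
  rw [h2] at h1
  simp only [Finset.sum_const, Finset.card_erase_of_mem (Finset.mem_univ i),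
    Finset.card_univ, Fintype.card_fin, nsmul_eq_mul, mul_one] at h1
  calc meanScore p i ≤ ((n - 1 : ℕ) : ℝ) := h1
    _ = (n : ℝ) - 1 := by push_cast [hn]; ring

/-- Integer score of a 0/1 matrix. -/
noncomputable def scoreNat {n : ℕ} (p : Fin n → Fin n → ℝ) (i : Fin n) : ℕ :=
  (Finset.univ.filter (fun j => j ≠ i ∧ p i j = 1)).card

lemma score_eq (h01 : ∀ i j, i ≠ j → p i j = 0 ∨ p i j = 1) (i : Fin n) :
    meanScore p i = (scoreNat p i : ℝ) := by
  unfold meanScore scoreNat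
  calc ∑ j ∈ Finset.univ.filter (fun j => j ≠ i), p i j
      = ∑ j ∈ Finset.univ.filter (fun j => j ≠ i), (if p i j = 1 then (1:ℝ) else 0) := by
        refine Finset.sum_congr rfl fun j hj => ?_
        have hji : j ≠ i := (Finset.mem_filter.1 hj).2
        rcases h01 i j (Ne.symm hji) with h | h <;> simp [h]
    _ = ((Finset.univ.filter (fun j => j ≠ i)).filter (fun j => p i j = 1)).card := by
        rw [Finset.sum_boole]
    _ = ((Finset.univ.filter (fun j => j ≠ i ∧ p i j = 1)).card : ℝ) := by
        rw [Finset.filter_filter]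

lemma scoreNat_lt (p : Fin n → Fin n → ℝ) (i : Fin n) : scoreNat p i < n := by
  have h1 : (Finset.univ.filter (fun j => j ≠ i ∧ p i j = 1)) ⊆ Finset.univ.erase i := by
    intro k hk
    simp only [Finset.mem_filter] at hk
    simp [hk.2.1]
  have hn := i.pos
  calc scoreNat p i ≤ (Finset.univ.erase i).card := Finset.card_le_card h1
    _ < n := by
        rw [Finset.card_erase_of_mem (Finset.mem_univ i)]
        simp only [Finset.card_univ, Fintype.card_fin]
        omega

/-- Base case: a 0/1 tournament with all scores distinct has scores `{0,…,n-1}`. -/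
lemma base_case (h01 : ∀ i j, i ≠ j → p i j = 0 ∨ p i j = 1)
    (hinj : Function.Injective (scoreNat p)) (φ : ℝ → ℝ) :
    ∑ i, φ (meanScore p i) = ∑ i : Fin n, φ ((i : ℕ) : ℝ) := by
  set e : Fin n → Fin n := fun i => ⟨scoreNat p i, scoreNat_lt p i⟩ with he
  have heinj : Function.Injective e := by
    intro a b hab
    apply hinj
    simpa [he, Fin.ext_iff] using hab
  have hbij : Function.Bijective e := (Finite.injective_iff_bijective).1 heinj
  have := Equiv.sum_comp (Equiv.ofBijective e hbij) (fun k : Fin n => φ ((k : ℕ) : ℝ))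
  rw [← this]
  refine Finset.sum_congr rfl fun i _ => ?_
  rw [score_eq h01 i]
  rfl

end Aux

/-- Deterministic case, by induction on a potential bounding `∑ scoreᵢ²` from above. -/
lemma det_aux (φ : ℝ → ℝ) (hφ : ConvexOn ℝ Set.univ φ) :
    ∀ (N : ℕ) {n : ℕ} (p : Fin n → Fin n → ℝ), IsWinProbMatrix p →
      (∀ i j, i ≠ j → p i j = 0 ∨ p i j = 1) →
      ((n : ℝ)^3 ≤ ∑ i, (meanScore p i)^2 + N) →
      ∑ i, φ (meanScore p i) ≤ ∑ i : Fin n, φ ((i : ℕ) : ℝ) := by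
  intro N
  induction N with
  | zero =>
    intro n p hp h01 hbound
    rcases Nat.eq_zero_or_pos n with rfl | hn
    · simp
    · exfalso
      have hsum : ∑ i, (meanScore p i)^2 ≤ (n : ℝ) * ((n : ℝ) - 1)^2 := by
        calc ∑ i, (meanScore p i)^2 ≤ ∑ _i : Fin n, ((n : ℝ) - 1)^2 := by
              refine Finset.sum_le_sum fun i _ => ?_
              have h1 := meanScore_nonneg hp i
              have h2 := meanScore_le hp i
              nlinarith
          _ = (n : ℝ) * ((n : ℝ) - 1)^2 := by
              simp [Finset.sum_const, Finset.card_univ, mul_comm]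
      have hn1 : (1 : ℝ) ≤ (n : ℝ) := by exact_mod_cast hn
      simp only [Nat.cast_zero, add_zero] at hbound
      nlinarith
  | succ N IH =>
    intro n p hp h01 hbound
    by_cases hinj : Function.Injective (scoreNat p)
    · exact le_of_eq (base_case h01 hinj φ)
    · -- there are two tied teams; pick the direction of the edge between them
      rw [Function.not_injective_iff] at hinj
      obtain ⟨i, j, hsij, hij⟩ := hinj
      have hx : meanScore p i = meanScore p j := by
        rw [score_eq h01 i, score_eq h01 j, hsij]
      -- uniform flip step
      have key : ∀ (i j : Fin n), i ≠ j → p i j = 1 → meanScore p i = meanScore p j →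
          ∑ k, φ (meanScore p k) ≤ ∑ k : Fin n, φ ((k : ℕ) : ℝ) := by
        clear hx hsij hij i j
        intro i j hij hpij hx
        set q := flip2 p i j 0 with hq
        have hqwp : IsWinProbMatrix q := isWinProbMatrix_flip2 hp hij le_rfl zero_le_one
        have hq01 : ∀ a b, a ≠ b → q a b = 0 ∨ q a b = 1 := by
          intro a b hab
          by_cases h1 : a = i ∧ b = j
          · obtain ⟨rfl, rfl⟩ := h1; rw [hq, flip2_ij]; left; rfl
          · by_cases h2 : a = j ∧ b = i
            · obtain ⟨rfl, rfl⟩ := h2; rw [hq, flip2_ji hij]; right; ring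
            · rw [hq, flip2_other h1 h2]; exact h01 a b hab
        have hpji : p j i = 0 := by
          have := hp.2 i j hij
          linarith
        have hqi : meanScore q i = meanScore p i - 1 := by
          rw [hq, meanScore_flip2_i hij, hpij]; ring
        have hqj : meanScore q j = meanScore p j + 1 := by
          rw [hq, meanScore_flip2_j hij, hpji]; ring
        have hqo : ∀ k, k ≠ i → k ≠ j → meanScore q k = meanScore p k := by
          intro k hki hkj
          rw [hq]; exact meanScore_flip2_other hki hkj
        -- potential increases by 2
        have hpot : ∑ k, (meanScore q k)^2 = ∑ k, (meanScore p k)^2 + 2 := by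
          have := sum_two_diff (fun k => (meanScore q k)^2) (fun k => (meanScore p k)^2)
            hij (fun k hki hkj => by rw [hqo k hki hkj])
          rw [this, hqi, hqj, hx]
          ring
        have hbound' : (n : ℝ)^3 ≤ ∑ k, (meanScore q k)^2 + N := by
          rw [hpot]
          push_cast at hbound ⊢
          linarith
        have hstep : ∑ k, φ (meanScore p k) ≤ ∑ k, φ (meanScore q k) := by
          have hsd := sum_two_diff (fun k => φ (meanScore q k)) (fun k => φ (meanScore p k))
            hij (fun k hki hkj => by rw [hqo k hki hkj])
          have hconv := two_mul_le hφ (meanScore p i)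
          rw [hsd, hqi, hqj, ← hx]
          linarith
        exact le_trans hstep (IH q hqwp hq01 hbound')
      -- orient the tied edge
      rcases h01 i j hij with h0 | h1
      · have hpji : p j i = 1 := by
          have := hp.2 i j hij
          linarith
        exact key j i (Ne.symm hij) hpji hx.symm
      · exact key i j hij h1 hx

open Classical in
/-- The set of unresolved (non-0/1) pairs. -/
noncomputable def badSet {n : ℕ} (p : Fin n → Fin n → ℝ) : Finset (Fin n × Fin n) :=
  Finset.univ.filter (fun ij => ij.1 < ij.2 ∧ p ij.1 ij.2 ≠ 0 ∧ p ij.1 ij.2 ≠ 1)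

lemma mem_badSet {n : ℕ} {p : Fin n → Fin n → ℝ} {a b : Fin n} :
    (a, b) ∈ badSet p ↔ a < b ∧ p a b ≠ 0 ∧ p a b ≠ 1 := by
  classical
  simp [badSet]

lemma exists_bad {n : ℕ} {p : Fin n → Fin n → ℝ} (hp : IsWinProbMatrix p)
    (hdet : ¬ ∀ i j, i ≠ j → p i j = 0 ∨ p i j = 1) :
    ∃ a b : Fin n, a < b ∧ p a b ≠ 0 ∧ p a b ≠ 1 := by
  push_neg at hdet
  obtain ⟨i, j, hij, h0, h1⟩ := hdet
  rcases lt_or_gt_of_ne hij with hlt | hgt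
  · exact ⟨i, j, hlt, h0, h1⟩
  · have hsum := hp.2 i j hij
    exact ⟨j, i, hgt, fun hc => h1 (by linarith), fun hc => h0 (by linarith)⟩

/-- Reduction to the deterministic case, by induction on the number of non-0/1 entries. -/
lemma red_aux (φ : ℝ → ℝ) (hφ : ConvexOn ℝ Set.univ φ) :
    ∀ (M : ℕ) {n : ℕ} (p : Fin n → Fin n → ℝ), IsWinProbMatrix p →
      (badSet p).card ≤ M →
      ∑ i, φ (meanScore p i) ≤ ∑ i : Fin n, φ ((i : ℕ) : ℝ) := by
  intro M
  induction M with
  | zero =>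
    intro n p hp hcard
    by_cases hdet : ∀ i j, i ≠ j → p i j = 0 ∨ p i j = 1
    · refine det_aux φ hφ (n^3) p hp hdet ?_
      have : (0:ℝ) ≤ ∑ i, (meanScore p i)^2 :=
        Finset.sum_nonneg fun i _ => sq_nonneg _
      push_cast
      linarith
    · exfalso
      obtain ⟨a, b, hab, h0, h1⟩ := exists_bad hp hdet
      have : (a, b) ∈ badSet p := mem_badSet.2 ⟨hab, h0, h1⟩
      have := Finset.card_pos.2 ⟨_, this⟩
      omega
  | succ M IH =>
    intro n p hp hcard
    by_cases hdet : ∀ i j, i ≠ j → p i j = 0 ∨ p i j = 1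
    · refine det_aux φ hφ (n^3) p hp hdet ?_
      have : (0:ℝ) ≤ ∑ i, (meanScore p i)^2 :=
        Finset.sum_nonneg fun i _ => sq_nonneg _
      push_cast
      linarith
    · obtain ⟨i, j, hlt, h0, h1⟩ := exists_bad hp hdet
      have hij : i ≠ j := ne_of_lt hlt
      have hmem : (i, j) ∈ badSet p := mem_badSet.2 ⟨hlt, h0, h1⟩
      have hpij := hp.1 i j
      have hpji : p j i = 1 - p i j := by
        have := hp.2 i j hij
        linarith
      -- generic step for a choice c ∈ {0,1}
      have key : ∀ c : ℝ, (c = 0 ∨ c = 1) →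
          (φ (meanScore p i) + φ (meanScore p j)
            ≤ φ (meanScore p i + (c - p i j)) + φ (meanScore p j + (p i j - c))) →
          ∑ k, φ (meanScore p k) ≤ ∑ k : Fin n, φ ((k : ℕ) : ℝ) := by
        intro c hc hφc
        set q := flip2 p i j c with hqdef
        have hc0 : 0 ≤ c := by rcases hc with rfl | rfl <;> norm_num
        have hc1 : c ≤ 1 := by rcases hc with rfl | rfl <;> norm_num
        have hqwp : IsWinProbMatrix q := isWinProbMatrix_flip2 hp hij hc0 hc1
        have hqi : meanScore q i = meanScore p i + (c - p i j) :=
          meanScore_flip2_i hij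
        have hqj : meanScore q j = meanScore p j + (p i j - c) := by
          rw [hqdef, meanScore_flip2_j hij, hpji]; ring
        have hqo : ∀ k, k ≠ i → k ≠ j → meanScore q k = meanScore p k :=
          fun k hki hkj => meanScore_flip2_other hki hkj
        have hsub : badSet q ⊆ (badSet p).erase (i, j) := by
          rintro ⟨a, b⟩ hab
          rw [mem_badSet] at hab
          obtain ⟨habl, ha0, ha1⟩ := hab
          have hne : (a, b) ≠ (i, j) := by
            rintro h
            obtain ⟨rfl, rfl⟩ := Prod.mk.injEq .. ▸ Prod.ext_iff.1 h
            rw [hqdef, flip2_ij] at ha0 ha1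
            rcases hc with rfl | rfl
            · exact ha0 rfl
            · exact ha1 rfl
          have hq_eq : q a b = p a b := by
            rw [hqdef]
            apply flip2_other
            · rintro ⟨rfl, rfl⟩; exact hne rfl
            · rintro ⟨rfl, rfl⟩; exact absurd hlt (not_lt_of_gt habl)
          rw [Finset.mem_erase]
          exact ⟨hne, mem_badSet.2 ⟨habl, hq_eq ▸ ha0, hq_eq ▸ ha1⟩⟩
        have hcard' : (badSet q).card ≤ M := by
          have h1 := Finset.card_le_card hsub
          rw [Finset.card_erase_of_mem hmem] at h1
          have h2 := Finset.card_pos.2 ⟨_, hmem⟩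
          omega
        have hstep : ∑ k, φ (meanScore p k) ≤ ∑ k, φ (meanScore q k) := by
          have hsd := sum_two_diff (fun k => φ (meanScore q k)) (fun k => φ (meanScore p k))
            hij (fun k hki hkj => by rw [hqo k hki hkj])
          rw [hsd, hqi, hqj]
          linarith
        exact le_trans hstep (IH q hqwp hcard')
      -- choose the better endpoint
      have hslide := slide_le_max hφ (meanScore p i) (meanScore p j) (p i j) (1 - p i j)
        hpij.1 (by linarith [hpij.2])
      rcases max_cases (φ (meanScore p i - p i j) + φ (meanScore p j + p i j))
          (φ (meanScore p i + (1 - p i j)) + φ (meanScore p j - (1 - p i j))) with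
        ⟨hmax, -⟩ | ⟨hmax, -⟩
      · refine key 0 (Or.inl rfl) ?_
        rw [hmax] at hslide
        convert hslide using 3 <;> ring
      · refine key 1 (Or.inr rfl) ?_
        rw [hmax] at hslide
        convert hslide using 3 <;> ring

/-- "Only if" direction of Moon's theorem, convex-order form: the mean score
sequence of any win-probability matrix is dominated in convex order by
`(0,1,…,n-1)`. -/
theorem meanScore_convex_order {n : ℕ} (p : Fin n → Fin n → ℝ)
    (hp : IsWinProbMatrix p) (x : Fin n → ℝ) (hx : ∀ i, x i = meanScore p i)
    (φ : ℝ → ℝ) (hφ : ConvexOn ℝ Set.univ φ) :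
    ∑ i, φ (x i) ≤ ∑ i : Fin n, φ ((i : ℕ) : ℝ) := by
  simp only [hx]
  exact red_aux φ hφ (badSet p).card p hp le_rfl
end

section
/- Deterministic case of Moon's theorem (one direction of Landau's theorem, convex form). Let p be a win-probability matrix of size n taking only the values 0 and 1 off the diagonal (i.e. p encodes a tournament: an orientation of the complete graph on n vertices), and let s be its score sequence, s i = ∑_{j ≠ i} p i j (the number of wins of team i). Then for every convex function φ : ℝ → ℝ, ∑_{i=0}^{n−1} φ(s i) ≤ ∑_{i=0}^{n−1} φ(i). -/
namespace TournAux

variable {n : ℕ}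

def nscore (r : Fin n → Fin n → Bool) (i : Fin n) : ℕ :=
  ∑ a ∈ Finset.univ.filter (fun a => a ≠ i), (if r i a then 1 else 0)

def flip (r : Fin n → Fin n → Bool) (i j : Fin n) : Fin n → Fin n → Bool :=
  fun a b => if a = i ∧ b = j then false else if a = j ∧ b = i then true else r a b


lemma nscore_le (r : Fin n → Fin n → Bool) (i : Fin n) : nscore r i ≤ n - 1 := by
  unfold nscore
  calc ∑ a ∈ Finset.univ.filter (fun a => a ≠ i), (if r i a then 1 else 0)
      ≤ ∑ a ∈ Finset.univ.filter (fun a => a ≠ i), 1 := by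
        apply Finset.sum_le_sum; intro a _; split <;> omega
    _ = (Finset.univ.filter (fun a => a ≠ i)).card := by simp
    _ = n - 1 := by rw [Finset.filter_ne', Finset.card_erase_of_mem (Finset.mem_univ i)]; simp

lemma pair_ineq (φ : ℝ → ℝ) (hφ : ConvexOn ℝ Set.univ φ) {x y : ℝ} (hxy : x ≤ y) :
    φ x + φ y ≤ φ (x - 1) + φ (y + 1) := by
  set a := x - 1 with ha
  set b := y + 1 with hb
  have hba : (0:ℝ) < b - a := by simp [ha, hb]; linarith
  set t : ℝ := 1 / (b - a) with htdef
  have ht0 : 0 ≤ t := by positivity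
  have ht1 : t ≤ 1 := by
    rw [htdef, div_le_one hba]; simp [ha, hb]; linarith
  have hx : x = (1 - t) * a + t * b := by
    have htb : t * (b - a) = 1 := by rw [htdef]; exact one_div_mul_cancel hba.ne'
    linear_combination -htb - ha
  have hy : y = t * a + (1 - t) * b := by
    have htb : t * (b - a) = 1 := by rw [htdef]; exact one_div_mul_cancel hba.ne'
    linear_combination htb - hb
  have h1 : φ x ≤ (1 - t) * φ a + t * φ b := by
    have := hφ.2 (Set.mem_univ a) (Set.mem_univ b) (by linarith : (0:ℝ) ≤ 1 - t) ht0 (by ring)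
    simpa [smul_eq_mul, ← hx] using this
  have h2 : φ y ≤ t * φ a + (1 - t) * φ b := by
    have := hφ.2 (Set.mem_univ a) (Set.mem_univ b) ht0 (by linarith : (0:ℝ) ≤ 1 - t) (by ring)
    simpa [smul_eq_mul, ← hy] using this
  nlinarith [h1, h2]

section FlipLemmas

variable (r : Fin n → Fin n → Bool) {i j : Fin n} (hij : i ≠ j)
  (hr : ∀ a b, a ≠ b → (r a b = !r b a))

include hij hr

lemma flip_tourn (hrij : r i j = true) :
    ∀ a b, a ≠ b → (flip r i j a b = !flip r i j b a) := by
  intro a b hab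
  unfold flip
  by_cases h1 : a = i ∧ b = j
  · obtain ⟨rfl, rfl⟩ := h1
    simp [hij, hij.symm]
  · by_cases h2 : a = j ∧ b = i
    · obtain ⟨rfl, rfl⟩ := h2
      simp [hij, hij.symm]
    · have h3 : ¬(b = i ∧ a = j) := fun ⟨hb, ha⟩ => h2 ⟨ha, hb⟩
      have h4 : ¬(b = j ∧ a = i) := fun ⟨hb, ha⟩ => h1 ⟨ha, hb⟩
      simp only [h1, h2, h3, h4, if_false]
      exact hr a b hab

omit hr in
lemma nscore_flip_i (hrij : r i j = true) :
    nscore (flip r i j) i + 1 = nscore r i := by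
  unfold nscore
  have hjmem : j ∈ Finset.univ.filter (fun a => a ≠ i) := by simp [hij.symm]
  rw [← Finset.add_sum_erase _ _ hjmem, ← Finset.add_sum_erase _ _ hjmem]
  have h1 : flip r i j i j = false := by simp [flip]
  have h2 : ∀ a ∈ (Finset.univ.filter (fun a => a ≠ i)).erase j,
      (if flip r i j i a then 1 else 0) = (if r i a then (1:ℕ) else 0) := by
    intro a ha
    have haj : a ≠ j := (Finset.mem_erase.1 ha).1
    have : flip r i j i a = r i a := by simp [flip, haj, hij]
    rw [this]
  rw [Finset.sum_congr rfl h2, h1, hrij]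
  simp [add_comm, add_assoc, add_left_comm]

lemma nscore_flip_j (hrij : r i j = true) :
    nscore (flip r i j) j = nscore r j + 1 := by
  unfold nscore
  have himem : i ∈ Finset.univ.filter (fun a => a ≠ j) := by simp [hij]
  rw [← Finset.add_sum_erase _ _ himem, ← Finset.add_sum_erase _ _ himem]
  have h1 : flip r i j j i = true := by simp [flip, hij.symm]
  have h1' : r j i = false := by
    have := hr i j hij
    rw [hrij] at this
    simpa using this.symm
  have h2 : ∀ a ∈ (Finset.univ.filter (fun a => a ≠ j)).erase i,
      (if flip r i j j a then 1 else 0) = (if r j a then (1:ℕ) else 0) := by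
    intro a ha
    have hai : a ≠ i := (Finset.mem_erase.1 ha).1
    have : flip r i j j a = r j a := by simp [flip, hai, hij.symm]
    rw [this]
  rw [Finset.sum_congr rfl h2, h1, h1']
  simp [add_comm, add_assoc, add_left_comm]

omit hij hr in
lemma nscore_flip_other {k : Fin n} (hki : k ≠ i) (hkj : k ≠ j) :
    nscore (flip r i j) k = nscore r k := by
  unfold nscore
  apply Finset.sum_congr rfl
  intro a _
  have : flip r i j k a = r k a := by simp [flip, hki, hkj]
  rw [this]

end FlipLemmas


lemma sum_split {M : Type*} [AddCommMonoid M] (f : Fin n → M) {i j : Fin n} (hij : i ≠ j) :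
    ∑ k, f k = f i + (f j + ∑ k ∈ (Finset.univ.erase i).erase j, f k) := by
  rw [← Finset.add_sum_erase _ f (Finset.mem_univ i),
    ← Finset.add_sum_erase _ f (show j ∈ Finset.univ.erase i by simp [hij.symm])]

lemma sum_sq_le (r : Fin n → Fin n → Bool) :
    ∑ i, (nscore r i)^2 ≤ n * (n-1)^2 := by
  calc ∑ i, (nscore r i)^2 ≤ ∑ _i : Fin n, (n-1)^2 :=
        Finset.sum_le_sum (fun i _ => Nat.pow_le_pow_left (nscore_le r i) 2)
    _ = n * (n-1)^2 := by simp [mul_comm]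


lemma sq_incr (r : Fin n → Fin n → Bool) {i j : Fin n} (hij : i ≠ j)
    (hr : ∀ a b, a ≠ b → (r a b = !r b a)) (hrij : r i j = true)
    (hle : nscore r i ≤ nscore r j) :
    ∑ k, (nscore r k)^2 < ∑ k, (nscore (flip r i j) k)^2 := by
  rw [sum_split (fun k => (nscore r k)^2) hij,
    sum_split (fun k => (nscore (flip r i j) k)^2) hij]
  have heq : ∑ k ∈ (Finset.univ.erase i).erase j, (nscore (flip r i j) k)^2
      = ∑ k ∈ (Finset.univ.erase i).erase j, (nscore r k)^2 := by
    apply Finset.sum_congr rfl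
    intro k hk
    have hkj : k ≠ j := (Finset.mem_erase.1 hk).1
    have hki : k ≠ i := (Finset.mem_erase.1 (Finset.mem_erase.1 hk).2).1
    rw [nscore_flip_other r (i:=i) (j:=j) hki hkj]
  rw [heq]
  have h1 := nscore_flip_i r hij hrij
  have h2 := nscore_flip_j r hij hr hrij
  set A := nscore (flip r i j) i with hA
  set b := nscore r j with hb
  rw [h2, ← h1]
  have hab : A + 1 ≤ b := by omega
  nlinarith

lemma phi_incr (φ : ℝ → ℝ) (hφ : ConvexOn ℝ Set.univ φ)
    (r : Fin n → Fin n → Bool) {i j : Fin n} (hij : i ≠ j)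
    (hr : ∀ a b, a ≠ b → (r a b = !r b a)) (hrij : r i j = true)
    (hle : nscore r i ≤ nscore r j) :
    ∑ k, φ ((nscore r k : ℕ) : ℝ) ≤ ∑ k, φ ((nscore (flip r i j) k : ℕ) : ℝ) := by
  rw [sum_split (fun k => φ ((nscore r k : ℕ) : ℝ)) hij,
    sum_split (fun k => φ ((nscore (flip r i j) k : ℕ) : ℝ)) hij]
  have heq : ∑ k ∈ (Finset.univ.erase i).erase j, φ ((nscore (flip r i j) k : ℕ) : ℝ)
      = ∑ k ∈ (Finset.univ.erase i).erase j, φ ((nscore r k : ℕ) : ℝ) := by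
    apply Finset.sum_congr rfl
    intro k hk
    have hkj : k ≠ j := (Finset.mem_erase.1 hk).1
    have hki : k ≠ i := (Finset.mem_erase.1 (Finset.mem_erase.1 hk).2).1
    rw [nscore_flip_other r (i:=i) (j:=j) hki hkj]
  rw [heq]
  have h1 := nscore_flip_i r hij hrij
  have h2 := nscore_flip_j r hij hr hrij
  have hx : ((nscore (flip r i j) i : ℕ) : ℝ) = ((nscore r i : ℕ) : ℝ) - 1 := by
    rw [← h1]; push_cast; ring
  have hy : ((nscore (flip r i j) j : ℕ) : ℝ) = ((nscore r j : ℕ) : ℝ) + 1 := by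
    rw [h2]; push_cast; ring
  rw [hx, hy]
  have hxy : ((nscore r i : ℕ) : ℝ) ≤ ((nscore r j : ℕ) : ℝ) := by exact_mod_cast hle
  have := pair_ineq φ hφ hxy
  linarith

lemma final_eq (φ : ℝ → ℝ) (r : Fin n → Fin n → Bool)
    (hr : ∀ a b, a ≠ b → (r a b = !r b a))
    (hex : ¬ ∃ i j, i ≠ j ∧ r i j = true ∧ nscore r i ≤ nscore r j) :
    ∑ i, φ ((nscore r i : ℕ) : ℝ) = ∑ i : Fin n, φ ((i : ℕ) : ℝ) := by
  push_neg at hex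
  have hlt : ∀ i, nscore r i < n := by
    intro i
    have := nscore_le r i
    have := i.pos
    omega
  set e : Fin n → Fin n := fun i => ⟨nscore r i, hlt i⟩ with he
  have hinj : Function.Injective e := by
    intro a b hab
    by_contra hne
    have hval : nscore r a = nscore r b := congrArg Fin.val hab
    cases h : r a b with
    | true =>
      have := hex a b hne h
      omega
    | false =>
      have hba : r b a = true := by
        have := hr a b hne
        rw [h] at this
        simpa using this.symm
      have := hex b a (Ne.symm hne) hba
      omega
  have hbij : Function.Bijective e := Finite.injective_iff_bijective.mp hinj
  exact Fintype.sum_bijective e hbij _ _ (fun i => rfl)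

lemma key (φ : ℝ → ℝ) (hφ : ConvexOn ℝ Set.univ φ) :
    ∀ (k : ℕ) (r : Fin n → Fin n → Bool),
      (∀ a b, a ≠ b → (r a b = !r b a)) →
      n * (n-1)^2 - ∑ i, (nscore r i)^2 ≤ k →
      ∑ i, φ ((nscore r i : ℕ) : ℝ) ≤ ∑ i : Fin n, φ ((i : ℕ) : ℝ) := by
  intro k
  induction k with
  | zero =>
    intro r hr hk
    by_cases hex : ∃ i j, i ≠ j ∧ r i j = true ∧ nscore r i ≤ nscore r j
    · obtain ⟨i, j, hij, hrij, hle⟩ := hex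
      have hincr := sq_incr r hij hr hrij hle
      have hb := sum_sq_le (flip r i j)
      omega
    · exact le_of_eq (final_eq φ r hr hex)
  | succ k ih =>
    intro r hr hk
    by_cases hex : ∃ i j, i ≠ j ∧ r i j = true ∧ nscore r i ≤ nscore r j
    · obtain ⟨i, j, hij, hrij, hle⟩ := hex
      have hincr := sq_incr r hij hr hrij hle
      have hb := sum_sq_le (flip r i j)
      have hrec := ih (flip r i j) (flip_tourn r hij hr hrij) (by omega)
      refine le_trans (phi_incr φ hφ r hij hr hrij hle) hrec
    · exact le_of_eq (final_eq φ r hr hex)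

end TournAux

/-- Deterministic (tournament) case: if `p` takes only values `0` and `1`
off the diagonal, its score sequence is dominated in convex order by
`(0,1,…,n-1)`. -/
theorem tournament_score_convex_order {n : ℕ} (p : Fin n → Fin n → ℝ)
    (hp : IsWinProbMatrix p)
    (hdet : ∀ i j, i ≠ j → p i j = 0 ∨ p i j = 1)
    (s : Fin n → ℝ) (hs : ∀ i, s i = meanScore p i)
    (φ : ℝ → ℝ) (hφ : ConvexOn ℝ Set.univ φ) :
    ∑ i, φ (s i) ≤ ∑ i : Fin n, φ ((i : ℕ) : ℝ) := by
  classical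
  set r : Fin n → Fin n → Bool := fun a b => decide (p a b = 1) with hrdef
  have hr : ∀ a b, a ≠ b → r a b = !r b a := by
    intro a b hab
    have hsum := hp.2 a b hab
    rcases hdet a b hab with h | h <;> rcases hdet b a (Ne.symm hab) with h' | h' <;>
      simp [hrdef, h, h'] <;> linarith
  have hsi : ∀ i, s i = ((TournAux.nscore r i : ℕ) : ℝ) := by
    intro i
    rw [hs i, meanScore, TournAux.nscore]
    push_cast [apply_ite (fun m : ℕ => (m : ℝ))]
    apply Finset.sum_congr rfl
    intro j hj
    have hji : j ≠ i := by simpa using hj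
    rcases hdet i j (Ne.symm hji) with h | h <;> simp [hrdef, h]
  calc ∑ i, φ (s i) = ∑ i, φ ((TournAux.nscore r i : ℕ) : ℝ) := by
        apply Finset.sum_congr rfl; intro i _; rw [hsi i]
    _ ≤ ∑ i : Fin n, φ ((i : ℕ) : ℝ) :=
        TournAux.key φ hφ (n * (n-1)^2) r hr (Nat.sub_le _ _)
end

section
/- The football construction. Let n ≥ 1 and let μ_0,…,μ_{n−1} be probability vectors on {0,1,…,n−1} (μ_i : Fin n → ℝ, nonnegative, summing to 1) such that (i) μ_i has mean x i, i.e. ∑_{j} j·μ_i(j) = x i, and (ii) ∑_{i} μ_i(j) = 1 for every j. Then for every i, ∑_{j ≠ i} χ(μ_i, μ_j) = x i. Consequently the matrix p with p i j = χ(μ_i, μ_j) for i ≠ j is a win-probability matrix with mean score sequence x. -/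
/-!
Exchanging the two samples shows `chi μ ν + chi ν μ = (∑ μ) (∑ ν)`, which gives the
win-probability axioms and `chi μ μ = 1/2`. Since `chi` is linear in its second argument,
`∑ j, chi (μ i) (μ j) = chi (μ i) (∑ j, μ j)`, and by the column condition the opponent is the
constant vector `1`, against which a value `a` beats the `a` smaller values and ties once.
So the full row sum is `x i + 1/2`, and dropping the diagonal term `1/2` leaves `x i`.
-/

open Finset

noncomputable def chi {n : ℕ} (μ ν : Fin n → ℝ) : ℝ :=
  (∑ a : Fin n, ∑ b ∈ Finset.univ.filter (fun b : Fin n => (b : ℕ) < (a : ℕ)), μ a * ν b)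
    + (1 / 2) * ∑ a : Fin n, μ a * ν a

section

variable {n : ℕ}

theorem chi_add_chi_swap (μ ν : Fin n → ℝ) : chi μ ν + chi ν μ = (∑ a, μ a) * ∑ b, ν b := by
  have htrich : ∀ a b : Fin n, μ a * ν b = (if b < a then μ a * ν b else 0)
      + (if a < b then μ a * ν b else 0) + (if b = a then μ a * ν b else 0) := by
    intro a b
    rcases lt_trichotomy a b with h | rfl | h
    · simp [h, h.ne', h.asymm]
    · simp
    · simp [h, h.ne, h.asymm]
  have hswap : ∑ a : Fin n, ∑ b : Fin n, (if b < a then ν a * μ b else 0)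
      = ∑ a : Fin n, ∑ b : Fin n, if a < b then μ a * ν b else 0 := by
    rw [sum_comm]; simp only [mul_comm]
  simp only [chi, sum_filter, Fin.val_fin_lt, hswap, sum_mul_sum]
  rw [sum_congr rfl fun a _ => sum_congr rfl fun b _ => htrich a b]
  simp only [sum_add_distrib, sum_ite_eq', mem_univ, if_true, mul_comm (ν _) (μ _)]
  ring

theorem chi_self (μ : Fin n → ℝ) : chi μ μ = (∑ a, μ a) ^ 2 / 2 := by
  linarith [chi_add_chi_swap μ μ]

theorem chi_nonneg {μ ν : Fin n → ℝ} (hμ : ∀ a, 0 ≤ μ a) (hν : ∀ b, 0 ≤ ν b) : 0 ≤ chi μ ν := by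
  have hprod : ∀ a b, 0 ≤ μ a * ν b := fun a b => mul_nonneg (hμ a) (hν b)
  exact add_nonneg (sum_nonneg fun a _ => sum_nonneg fun b _ => hprod a b)
    (mul_nonneg (by norm_num) (sum_nonneg fun a _ => hprod a a))

theorem chi_add_right (μ ν ν' : Fin n → ℝ) : chi μ (ν + ν') = chi μ ν + chi μ ν' := by
  simp only [chi, Pi.add_apply, mul_add, sum_add_distrib]; ring

theorem chi_sum_right {ι : Type*} (μ : Fin n → ℝ) (ν : ι → Fin n → ℝ) (s : Finset ι) :
    chi μ (∑ j ∈ s, ν j) = ∑ j ∈ s, chi μ (ν j) :=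
  map_sum (AddMonoidHom.mk' (chi μ) (chi_add_right μ)) ν s

theorem chi_one_right (μ : Fin n → ℝ) :
    chi μ 1 = ∑ a : Fin n, ((a : ℕ) : ℝ) * μ a + (∑ a, μ a) / 2 := by
  have hcard : ∀ a : Fin n, #(univ.filter fun b => b < a) = a := by
    intro a; rw [filter_gt_eq_Iio, Fin.card_Iio]
  simp [chi, hcard, mul_comm, div_eq_mul_inv]

end

theorem football_construction_general {n : ℕ}
    (μ : Fin n → Fin n → ℝ) (x : Fin n → ℝ)
    (hnonneg : ∀ i j, 0 ≤ μ i j)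
    (hrow : ∀ i, ∑ j : Fin n, μ i j = 1)
    (hmean : ∀ i, ∑ j : Fin n, ((j : ℕ) : ℝ) * μ i j = x i)
    (hcol : ∀ j, ∑ i : Fin n, μ i j = 1) :
    (∀ i, ∑ j ∈ Finset.univ.filter (fun j => j ≠ i), chi (μ i) (μ j) = x i) ∧
    (∀ i j, 0 ≤ chi (μ i) (μ j) ∧ chi (μ i) (μ j) ≤ 1) ∧
    (∀ i j, i ≠ j → chi (μ i) (μ j) + chi (μ j) (μ i) = 1) := by
  have hpair : ∀ i j, chi (μ i) (μ j) + chi (μ j) (μ i) = 1 := fun i j => by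
    rw [chi_add_chi_swap, hrow, hrow, one_mul]
  have hcolsum : ∑ j, μ j = 1 := funext fun b => by rw [Finset.sum_apply]; exact hcol b
  have hscore : ∀ i, ∑ j, chi (μ i) (μ j) = x i + 1 / 2 := fun i => by
    rw [← chi_sum_right, hcolsum, chi_one_right, hmean, hrow]
  refine ⟨fun i => ?_, fun i j => ⟨chi_nonneg (hnonneg i) (hnonneg j), ?_⟩, fun i j _ => hpair i j⟩
  · rw [filter_ne', sum_erase_eq_sub (mem_univ i), hscore, chi_self, hrow]
    ring
  · linarith [hpair i j, chi_nonneg (hnonneg j) (hnonneg i)]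

/-- The football construction: given probability vectors `μ i` on `{0,…,n-1}`
with `μ i` of mean `x i` and with all column sums equal to `1`, the matrix
`p i j = chi (μ i) (μ j)` is a win-probability matrix with mean score
sequence `x`. -/
theorem football_construction {n : ℕ} (hn : 1 ≤ n)
    (μ : Fin n → Fin n → ℝ) (x : Fin n → ℝ)
    (hnonneg : ∀ i j, 0 ≤ μ i j)
    (hrow : ∀ i, ∑ j : Fin n, μ i j = 1)
    (hmean : ∀ i, ∑ j : Fin n, ((j : ℕ) : ℝ) * μ i j = x i)
    (hcol : ∀ j, ∑ i : Fin n, μ i j = 1) :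
    (∀ i, ∑ j ∈ Finset.univ.filter (fun j => j ≠ i), chi (μ i) (μ j) = x i) ∧
    (∀ i j, 0 ≤ chi (μ i) (μ j) ∧ chi (μ i) (μ j) ≤ 1) ∧
    (∀ i j, i ≠ j → chi (μ i) (μ j) + chi (μ j) (μ i) = 1) :=
  football_construction_general μ x hnonneg hrow hmean hcol
end

section
/- Permutation lemma. Let n ≥ 1 and let q : Fin n → ℝ satisfy 1 ≤ q i ≤ n for all i, and suppose that for every convex function φ : ℝ → ℝ one has ∑_{i=0}^{n−1} φ(q i) ≤ ∑_{j=1}^{n} φ(j) (i.e. q(1+U_n) is dominated in convex order by 1+U_n, where U_n is uniform on {0,…,n−1}). Then there exists a probability distribution over permutations of Fin n, i.e. weights w : Equiv.Perm (Fin n) → ℝ with w ≥ 0 and ∑_π w(π) = 1, such that for every i, ∑_π w(π)·((π i : ℕ) + 1) = q i. -/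
/-!
By Hahn–Banach, `q` lies in the convex hull of the rank vectors `i ↦ π i + 1` as soon as every
linear functional `c` satisfies `∑ cᵢ qᵢ ≤ ∑ cᵢ (π i + 1)` for some `π`. Taking `π` to sort `c`
increasingly, Abel summation reduces this to the prefix-sum inequalities: any `m` of the values of
`q` sum to at least `1 + ⋯ + m`, with equality for `m = n`. These follow from the convex order
tested on `x ↦ x`, `x ↦ -x` and `x ↦ max (m + 1 - x) 0`.
-/

open Finset

theorem exists_weights_of_mem_convexHull_range {ι E : Type*} [Fintype ι] [AddCommGroup E]
    [Module ℝ E] {v : ι → E} {x : E} (hx : x ∈ convexHull ℝ (Set.range v)) :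
    ∃ w : ι → ℝ, (∀ i, 0 ≤ w i) ∧ ∑ i, w i = 1 ∧ ∑ i, w i • v i = x := by
  classical
  have hv : Set.range v = Fintype.linearCombination ℝ v '' Set.range fun i ↦ Pi.single i 1 := by
    rw [← Set.range_comp]
    congr 1
    ext i
    simp [Fintype.linearCombination_apply_single]
  rw [hv, ← LinearMap.image_convexHull, convexHull_rangle_single_eq_stdSimplex] at hx
  obtain ⟨w, ⟨hw₀, hw₁⟩, rfl⟩ := hx
  exact ⟨w, hw₀, hw₁, (Fintype.linearCombination_apply ℝ v w).symm⟩

theorem mem_convexHull_of_forall_exists_le {E : Type*} [AddCommGroup E] [TopologicalSpace E]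
    [IsTopologicalAddGroup E] [T2Space E] [Module ℝ E] [ContinuousSMul ℝ E]
    [LocallyConvexSpace ℝ E] {s : Set E} (hs : s.Finite) {x : E}
    (h : ∀ f : StrongDual ℝ E, ∃ a ∈ s, f x ≤ f a) : x ∈ convexHull ℝ s := by
  by_contra hx
  obtain ⟨f, u, hfs, hfx⟩ := geometric_hahn_banach_closed_point (convex_convexHull ℝ s)
    ((hs.isCompact_convexHull (𝕜 := ℝ)).isClosed) hx
  obtain ⟨a, ha, hxa⟩ := h f
  linarith [hfs a (subset_convexHull ℝ s ha)]

section ConvexOrder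

variable {ι κ : Type*} [Fintype ι] [Fintype κ] {x : ι → ℝ} {y : κ → ℝ}

theorem sum_eq_sum_of_forall_convexOn
    (h : ∀ φ : ℝ → ℝ, ConvexOn ℝ Set.univ φ → ∑ i, φ (x i) ≤ ∑ j, φ (y j)) :
    ∑ i, x i = ∑ j, y j := by
  have hle := h id (convexOn_id convex_univ)
  have hge := h (fun t ↦ -t) (concaveOn_id convex_univ).neg
  simp only [id, sum_neg_distrib, neg_le_neg_iff] at hle hge
  exact hle.antisymm hge

theorem sum_max_sub_le_of_forall_convexOn
    (h : ∀ φ : ℝ → ℝ, ConvexOn ℝ Set.univ φ → ∑ i, φ (x i) ≤ ∑ j, φ (y j)) (t : ℝ) :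
    ∑ i, max (t - x i) 0 ≤ ∑ j, max (t - y j) 0 := by
  simpa [neg_add_eq_sub] using
    h _ ((((concaveOn_id convex_univ).neg).add_const t).sup (convexOn_const 0 convex_univ))

end ConvexOrder

section Permutohedron

variable {n : ℕ}

theorem sum_mul_le_mul_sum_of_monotone {b e : Fin n → ℝ} (hb : Monotone b)
    (he : ∀ m : ℕ, 0 ≤ ∑ k : Fin n with k.val < m, e k) {B : ℝ} (hB : ∀ k, b k ≤ B) :
    ∑ k, b k * e k ≤ B * ∑ k, e k := by
  induction n generalizing B with
  | zero => simp
  | succ n ih =>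
    have he' : ∀ m : ℕ, 0 ≤ ∑ k : Fin n with k.val < m, e k.castSucc := by
      intro m
      convert he (min m n) using 1
      rw [sum_filter, sum_filter, Fin.sum_univ_castSucc]
      simp
    have hlast := ih (hb.comp Fin.strictMono_castSucc.monotone) he'
      fun k ↦ hb (Fin.castSucc_lt_last k).le
    have htotal : 0 ≤ ∑ k, e k := by
      simpa [Fin.is_le] using he (n + 1)
    calc ∑ k, b k * e k ≤ b (Fin.last n) * ∑ k, e k := by
          rw [Fin.sum_univ_castSucc, Fin.sum_univ_castSucc e, mul_add]
          exact add_le_add_left hlast _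
      _ ≤ B * ∑ k, e k := mul_le_mul_of_nonneg_right (hB _) htotal

theorem sum_mul_le_sum_mul_of_prefix_sum_le {b x y : Fin n → ℝ} (hb : Monotone b)
    (hsum : ∑ k, x k = ∑ k, y k)
    (hprefix : ∀ m : ℕ, ∑ k : Fin n with k.val < m, y k ≤ ∑ k : Fin n with k.val < m, x k) :
    ∑ k, b k * x k ≤ ∑ k, b k * y k := by
  obtain ⟨B, hB⟩ := (Set.finite_range b).bddAbove
  have key := sum_mul_le_mul_sum_of_monotone hb (e := x - y)
    (fun m ↦ by simpa [sum_sub_distrib] using hprefix m) fun k ↦ hB (Set.mem_range_self k)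
  simpa [mul_sub, sum_sub_distrib, hsum] using key

theorem prefix_sum_le_of_sum_max_sub_le {x y : Fin n → ℝ} (hy : Monotone y)
    (hsum : ∑ k, x k = ∑ k, y k)
    (hmax : ∀ t, ∑ k, max (t - x k) 0 ≤ ∑ k, max (t - y k) 0) (m : ℕ) :
    ∑ k : Fin n with k.val < m, y k ≤ ∑ k : Fin n with k.val < m, x k := by
  by_cases hm : m < n
  swap
  · simpa [filter_true_of_mem fun (k : Fin n) _ ↦ k.isLt.trans_le (not_lt.1 hm)] using hsum.ge
  -- as `y` is monotone, `max (y m - y k) 0` is `y m - y k` for `k < m` and `0` otherwise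
  set t := y ⟨m, hm⟩
  have hy_max : ∑ k, max (t - y k) 0 = ∑ k : Fin n with k.val < m, (t - y k) := by
    rw [sum_filter]
    refine sum_congr rfl fun k _ ↦ ?_
    split_ifs with hk
    · exact max_eq_left (sub_nonneg.2 (hy (Fin.le_def.2 hk.le)))
    · exact max_eq_right (sub_nonpos.2 (hy (Fin.le_def.2 (not_lt.1 hk))))
  have : ∑ k : Fin n with k.val < m, (t - x k) ≤ ∑ k : Fin n with k.val < m, (t - y k) :=
    calc ∑ k : Fin n with k.val < m, (t - x k)
        ≤ ∑ k : Fin n with k.val < m, max (t - x k) 0 := sum_le_sum fun k _ ↦ le_max_left _ _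
      _ ≤ ∑ k, max (t - x k) 0 :=
          sum_le_sum_of_subset_of_nonneg (subset_univ _) fun k _ _ ↦ le_max_right _ _
      _ ≤ _ := hy_max ▸ hmax t
  rw [sum_sub_distrib, sum_sub_distrib] at this
  linarith

theorem exists_perm_sum_mul_le {x y : Fin n → ℝ} (hy : Monotone y)
    (hsum : ∑ k, x k = ∑ k, y k)
    (hmax : ∀ t, ∑ k, max (t - x k) 0 ≤ ∑ k, max (t - y k) 0) (c : Fin n → ℝ) :
    ∃ σ : Equiv.Perm (Fin n), ∑ i, c i * x i ≤ ∑ i, c i * y (σ i) := by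
  set τ := Tuple.sort c
  refine ⟨τ.symm, ?_⟩
  have hsum' : ∑ k, x (τ k) = ∑ k, y k := (Equiv.sum_comp τ x).trans hsum
  have hmax' (t : ℝ) : ∑ k, max (t - x (τ k)) 0 ≤ ∑ k, max (t - y k) 0 :=
    (Equiv.sum_comp τ fun i ↦ max (t - x i) 0).trans_le (hmax t)
  calc ∑ i, c i * x i = ∑ k, c (τ k) * x (τ k) := (Equiv.sum_comp τ _).symm
    _ ≤ ∑ k, c (τ k) * y k := sum_mul_le_sum_mul_of_prefix_sum_le (Tuple.monotone_sort c) hsum'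
          (prefix_sum_le_of_sum_max_sub_le hy hsum' hmax')
    _ = ∑ i, c i * y (τ.symm i) := by
          rw [← Equiv.sum_comp τ fun i ↦ c i * y (τ.symm i)]
          simp

theorem mem_convexHull_range_comp_perm {x y : Fin n → ℝ} (hy : Monotone y)
    (hsum : ∑ k, x k = ∑ k, y k)
    (hmax : ∀ t, ∑ k, max (t - x k) 0 ≤ ∑ k, max (t - y k) 0) :
    x ∈ convexHull ℝ (Set.range fun σ : Equiv.Perm (Fin n) ↦ y ∘ σ) := by
  refine mem_convexHull_of_forall_exists_le (Set.finite_range _) fun f ↦ ?_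
  set c : Fin n → ℝ := fun i ↦ f fun j ↦ if i = j then 1 else 0
  have hf (v : Fin n → ℝ) : f v = ∑ i, c i * v i := by
    simpa [mul_comm] using f.toLinearMap.pi_apply_eq_sum_univ v
  obtain ⟨σ, hσ⟩ := exists_perm_sum_mul_le hy hsum hmax c
  exact ⟨y ∘ σ, Set.mem_range_self σ, by simpa [hf] using hσ⟩

end Permutohedron

theorem permutation_lemma_general {n : ℕ} (q : Fin n → ℝ)
    (hconv : ∀ φ : ℝ → ℝ, ConvexOn ℝ Set.univ φ →
      ∑ i, φ (q i) ≤ ∑ j : Fin n, φ (((j : ℕ) : ℝ) + 1)) :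
    ∃ w : Equiv.Perm (Fin n) → ℝ,
      (∀ π, 0 ≤ w π) ∧ (∑ π : Equiv.Perm (Fin n), w π = 1) ∧
      ∀ i, ∑ π : Equiv.Perm (Fin n), w π * (((π i : ℕ) : ℝ) + 1) = q i := by
  have hrank : Monotone fun j : Fin n ↦ ((j : ℕ) : ℝ) + 1 := fun i j hij ↦ by simpa using hij
  obtain ⟨w, hw₀, hw₁, hwq⟩ := exists_weights_of_mem_convexHull_range <|
    mem_convexHull_range_comp_perm hrank (sum_eq_sum_of_forall_convexOn hconv)
      (sum_max_sub_le_of_forall_convexOn hconv)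
  refine ⟨w, hw₀, hw₁, fun i ↦ ?_⟩
  simpa [Finset.sum_apply] using congrFun hwq i

/-- Permutation lemma: if `q : Fin n → [1,n]` is dominated in convex order by
the uniform distribution on `{1,…,n}`, then `q` is the mean rank vector of
some random permutation. -/
theorem permutation_lemma {n : ℕ} (hn : 1 ≤ n) (q : Fin n → ℝ)
    (hq : ∀ i, 1 ≤ q i ∧ q i ≤ n)
    (hconv : ∀ φ : ℝ → ℝ, ConvexOn ℝ Set.univ φ →
      ∑ i, φ (q i) ≤ ∑ j : Fin n, φ (((j : ℕ) : ℝ) + 1)) :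
    ∃ w : Equiv.Perm (Fin n) → ℝ,
      (∀ π, 0 ≤ w π) ∧ (∑ π : Equiv.Perm (Fin n), w π = 1) ∧
      ∀ i, ∑ π : Equiv.Perm (Fin n), w π * (((π i : ℕ) : ℝ) + 1) = q i :=
  permutation_lemma_general q hconv
end

section
/- Joe's theorem. For n ≥ 1, let L(u) = e^u/(1+e^u) be the logistic function, and let B ⊆ ℝ^n be the set of Bradley–Terry mean score sequences, i.e. B = { x : Fin n → ℝ | ∃ λ : Fin n → ℝ, ∀ i, x i = ∑_{j ≠ i} L(λ i − λ j) }. Let M ⊆ ℝ^n be the set of mean score sequences of win-probability matrices of size n. Then the closure of B in ℝ^n equals M. -/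
/-- The logistic function `L(u) = e^u / (1 + e^u)`. -/
noncomputable def logisticL (u : ℝ) : ℝ := Real.exp u / (1 + Real.exp u)

open Finset Real



lemma logisticL_pos (u : ℝ) : 0 < logisticL u :=
  div_pos (exp_pos u) (by positivity)

lemma logisticL_lt_one (u : ℝ) : logisticL u < 1 := by
  rw [logisticL, div_lt_one (by positivity)]; linarith [exp_pos u]

lemma logisticL_add_neg (u : ℝ) : logisticL u + logisticL (-u) = 1 := by
  have h := exp_pos u
  rw [logisticL, logisticL, exp_neg]
  field_simp
  ring

lemma logisticL_sub_eq (a b : ℝ) : logisticL (a - b) = exp a / (exp a + exp b) := by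
  have ha := exp_pos a; have hb := exp_pos b
  rw [logisticL, exp_sub]
  rw [div_eq_div_iff (by positivity) (by positivity)]
  field_simp
  ring

lemma sum_filter_swap {n : ℕ} (f : Fin n → Fin n → ℝ) :
    ∑ i, ∑ j ∈ Finset.univ.filter (fun j => j ≠ i), f i j
      = ∑ i, ∑ j ∈ Finset.univ.filter (fun j => j ≠ i), f j i := by
  simp only [Finset.sum_filter]
  rw [Finset.sum_comm]
  exact Finset.sum_congr rfl fun a _ => Finset.sum_congr rfl fun b _ =>
    if_congr ne_comm rfl rfl

lemma sum_scores_eq {n : ℕ} (f g : Fin n → Fin n → ℝ)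
    (hf : ∀ i j, i ≠ j → f i j + f j i = 1) (hg : ∀ i j, i ≠ j → g i j + g j i = 1) :
    ∑ i, ∑ j ∈ Finset.univ.filter (fun j => j ≠ i), f i j
      = ∑ i, ∑ j ∈ Finset.univ.filter (fun j => j ≠ i), g i j := by
  have key : ∀ h : Fin n → Fin n → ℝ, (∀ i j, i ≠ j → h i j + h j i = 1) →
      (∑ i, ∑ j ∈ Finset.univ.filter (fun j : Fin n => j ≠ i), h i j) * 2
        = ∑ i, ∑ j ∈ Finset.univ.filter (fun j : Fin n => j ≠ i), (1:ℝ) := by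
    intro h hh
    have swap := sum_filter_swap h
    calc (∑ i, ∑ j ∈ Finset.univ.filter (fun j => j ≠ i), h i j) * 2
        = (∑ i, ∑ j ∈ Finset.univ.filter (fun j => j ≠ i), h i j)
          + ∑ i, ∑ j ∈ Finset.univ.filter (fun j => j ≠ i), h j i := by rw [← swap]; ring
      _ = ∑ i, ∑ j ∈ Finset.univ.filter (fun j => j ≠ i), (h i j + h j i) := by
          rw [← Finset.sum_add_distrib]
          exact Finset.sum_congr rfl fun i _ => (Finset.sum_add_distrib).symm
      _ = ∑ i, ∑ j ∈ Finset.univ.filter (fun j => j ≠ i), (1:ℝ) := by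
          refine Finset.sum_congr rfl fun i _ => Finset.sum_congr rfl fun j hj => ?_
          exact hh i j (Finset.mem_filter.mp hj).2.symm
  have h1 := key f hf; have h2 := key g hg
  linarith

lemma log_term_lb (a b c d ε : ℝ) (hc : ε ≤ c) (hd : ε ≤ d) (hcd : c + d = 1) :
    ε * |a - b| ≤ Real.log (Real.exp a + Real.exp b) - (c * a + d * b) := by
  have hc' : c = 1 - d := by linarith
  rcases le_total b a with h | h
  · have h2 : a ≤ Real.log (exp a + exp b) := by
      have := Real.log_le_log (exp_pos a) (le_add_of_nonneg_right (exp_pos b).le :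
        exp a ≤ exp a + exp b)
      rwa [Real.log_exp a] at this
    rw [abs_of_nonneg (by linarith), hc']
    nlinarith [mul_le_mul_of_nonneg_right hd (show (0:ℝ) ≤ a - b by linarith)]
  · have hd' : d = 1 - c := by linarith
    have h2 : b ≤ Real.log (exp a + exp b) := by
      have := Real.log_le_log (exp_pos b) (le_add_of_nonneg_left (exp_pos a).le :
        exp b ≤ exp a + exp b)
      rwa [Real.log_exp b] at this
    rw [abs_of_nonpos (by linarith), hd']
    nlinarith [mul_le_mul_of_nonneg_right hc (show (0:ℝ) ≤ b - a by linarith)]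

lemma norm_le_pairsum {n : ℕ} (hn : 1 ≤ n) (l : Fin n → ℝ) (hsum : ∑ i, l i = 0) :
    ‖l‖ ≤ ∑ i, ∑ j ∈ Finset.univ.filter (fun j => j ≠ i), |l i - l j| := by
  haveI : Nonempty (Fin n) := ⟨⟨0, hn⟩⟩
  have hN0 : (0:ℝ) ≤ ∑ i, ∑ j ∈ Finset.univ.filter (fun j => j ≠ i), |l i - l j| :=
    Finset.sum_nonneg fun i _ => Finset.sum_nonneg fun j _ => abs_nonneg _
  obtain ⟨i0, -, h0⟩ := Finset.exists_max_image Finset.univ l ⟨_, Finset.mem_univ (Classical.arbitrary (Fin n))⟩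
  obtain ⟨i1, -, h1⟩ := Finset.exists_min_image Finset.univ l ⟨_, Finset.mem_univ (Classical.arbitrary (Fin n))⟩
  replace h0 : ∀ a, l a ≤ l i0 := fun a => h0 a (Finset.mem_univ a)
  replace h1 : ∀ a, l i1 ≤ l a := fun a => h1 a (Finset.mem_univ a)
  by_cases heq : l i0 = l i1
  · have hall : ∀ k, l k = 0 := by
      have hconst : ∀ k, l k = l i0 := fun k => le_antisymm (h0 k) (heq ▸ h1 k)
      have : ∑ i, l i = (n : ℝ) * l i0 := by
        rw [Finset.sum_congr rfl fun k _ => hconst k, Finset.sum_const, Finset.card_univ,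
          Fintype.card_fin, nsmul_eq_mul]
      have hn' : (0:ℝ) < n := by exact_mod_cast hn
      have hz : (n : ℝ) * l i0 = 0 := by rw [← this]; exact hsum
      have hz' : l i0 = 0 := by
        rcases mul_eq_zero.mp hz with h | h
        · exact absurd h (ne_of_gt hn')
        · exact h
      intro k; rw [hconst k]; exact hz'
    have hl0 : ‖l‖ = 0 := by
      have : l = 0 := funext fun k => hall k
      simp [this]
    rw [hl0]; exact hN0
  · have hne : i0 ≠ i1 := fun h => heq (h ▸ rfl)
    -- l i0 ≥ 0 ≥ l i1
    have hm0 : 0 ≤ l i0 := by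
      by_contra h
      push_neg at h
      have : ∑ i, l i < ∑ i, (0:ℝ) :=
        Finset.sum_lt_sum_of_nonempty Finset.univ_nonempty fun i _ => lt_of_le_of_lt (h0 i) h
      simp [hsum] at this
    have hm1 : l i1 ≤ 0 := by
      by_contra h
      push_neg at h
      have : ∑ i, (0:ℝ) < ∑ i, l i :=
        Finset.sum_lt_sum_of_nonempty Finset.univ_nonempty fun i _ => lt_of_lt_of_le h (h1 i)
      simp [hsum] at this
    have hbound : ∀ k, ‖l k‖ ≤ l i0 - l i1 := by
      intro k
      rw [Real.norm_eq_abs, abs_le]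
      constructor <;> [linarith [h1 k, h0 k]; linarith [h0 k, h1 k]]
    refine le_trans (pi_norm_le_iff_of_nonneg (by linarith [h0 i1]) |>.mpr hbound) ?_
    have hterm : l i0 - l i1 ≤ ∑ j ∈ Finset.univ.filter (fun j => j ≠ i0), |l i0 - l j| := by
      have hmem : i1 ∈ Finset.univ.filter (fun j => j ≠ i0) := by
        simp [Finset.mem_filter, hne.symm]
      calc l i0 - l i1 ≤ |l i0 - l i1| := le_abs_self _
        _ ≤ _ := Finset.single_le_sum (f := fun j => |l i0 - l j|) (fun j _ => abs_nonneg _) hmem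
    refine le_trans hterm (Finset.single_le_sum (f := fun i => ∑ j ∈ Finset.univ.filter (fun j => j ≠ i), |l i - l j|) (fun i _ => Finset.sum_nonneg fun j _ => abs_nonneg _) (Finset.mem_univ i0))



noncomputable def btS {n : ℕ} (l : Fin n → ℝ) (i : Fin n) : ℝ :=
  ∑ j ∈ Finset.univ.filter (fun j => j ≠ i), logisticL (l i - l j)

noncomputable def Gfun {n : ℕ} (x : Fin n → ℝ) (l : Fin n → ℝ) : ℝ :=
  (∑ i, ∑ j ∈ Finset.univ.filter (fun j => j ≠ i), Real.log (exp (l i) + exp (l j))) / 2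
    - ∑ i, x i * l i

lemma double_sum_x {n : ℕ} (q : Fin n → Fin n → ℝ) (l : Fin n → ℝ) :
    (∑ i, meanScore q i * l i) * 2
      = ∑ i, ∑ j ∈ Finset.univ.filter (fun j => j ≠ i), (q i j * l i + q j i * l j) := by
  have h1 : ∑ i, meanScore q i * l i
      = ∑ i, ∑ j ∈ Finset.univ.filter (fun j => j ≠ i), q i j * l i := by
    refine Finset.sum_congr rfl fun i _ => ?_
    rw [meanScore, Finset.sum_mul]
  have h2 := sum_filter_swap (fun i j => q i j * l i)
  calc (∑ i, meanScore q i * l i) * 2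
      = (∑ i, ∑ j ∈ Finset.univ.filter (fun j => j ≠ i), q i j * l i)
        + ∑ i, ∑ j ∈ Finset.univ.filter (fun j => j ≠ i), q j i * l j := by
        rw [h1, h2.symm.trans h1.symm]; rw [h1]; ring
    _ = _ := by
        rw [← Finset.sum_add_distrib]
        exact Finset.sum_congr rfl fun i _ => (Finset.sum_add_distrib).symm

lemma Gfun_lb {n : ℕ} (hn : 1 ≤ n) (ε : ℝ) (hε : 0 < ε) (q : Fin n → Fin n → ℝ)
    (hq1 : ∀ i j, i ≠ j → q i j + q j i = 1) (hq0 : ∀ i j, i ≠ j → ε ≤ q i j)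
    (l : Fin n → ℝ) (hsum : ∑ i, l i = 0) :
    ε / 2 * ‖l‖ ≤ Gfun (meanScore q) l := by
  have hx := double_sum_x q l
  have hterm : ∑ i, ∑ j ∈ Finset.univ.filter (fun j => j ≠ i), ε * |l i - l j|
      ≤ ∑ i, ∑ j ∈ Finset.univ.filter (fun j => j ≠ i),
          (Real.log (exp (l i) + exp (l j)) - (q i j * l i + q j i * l j)) := by
    refine Finset.sum_le_sum fun i _ => Finset.sum_le_sum fun j hj => ?_
    have hij : j ≠ i := (Finset.mem_filter.mp hj).2
    exact log_term_lb (l i) (l j) (q i j) (q j i) ε (hq0 i j hij.symm) (hq0 j i hij)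
      (hq1 i j hij.symm)
  have hsplit : ∑ i, ∑ j ∈ Finset.univ.filter (fun j => j ≠ i),
          (Real.log (exp (l i) + exp (l j)) - (q i j * l i + q j i * l j))
      = (∑ i, ∑ j ∈ Finset.univ.filter (fun j => j ≠ i), Real.log (exp (l i) + exp (l j)))
        - ∑ i, ∑ j ∈ Finset.univ.filter (fun j => j ≠ i), (q i j * l i + q j i * l j) := by
    rw [← Finset.sum_sub_distrib]
    exact Finset.sum_congr rfl fun i _ => Finset.sum_sub_distrib _ _
  have hN : ∑ i, ∑ j ∈ Finset.univ.filter (fun j => j ≠ i), ε * |l i - l j|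
      = ε * ∑ i, ∑ j ∈ Finset.univ.filter (fun j => j ≠ i), |l i - l j| := by
    rw [Finset.mul_sum]
    exact Finset.sum_congr rfl fun i _ => (Finset.mul_sum _ _ _).symm
  have hnorm := norm_le_pairsum hn l hsum
  have h1 : ε * ‖l‖ ≤ ε * ∑ i, ∑ j ∈ Finset.univ.filter (fun j => j ≠ i), |l i - l j| :=
    mul_le_mul_of_nonneg_left hnorm hε.le
  rw [Gfun]
  rw [hN] at hterm
  rw [hsplit] at hterm
  linarith

lemma core {n : ℕ} (hn : 1 ≤ n) (ε : ℝ) (hε : 0 < ε) (q : Fin n → Fin n → ℝ)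
    (hq1 : ∀ i j, i ≠ j → q i j + q j i = 1) (hq0 : ∀ i j, i ≠ j → ε ≤ q i j) :
    ∃ lam : Fin n → ℝ, ∀ i, meanScore q i
      = ∑ j ∈ Finset.univ.filter (fun j => j ≠ i), logisticL (lam i - lam j) := by
  set x : Fin n → ℝ := meanScore q with hxdef
  set G : (Fin n → ℝ) → ℝ := Gfun x with hGdef
  -- continuity
  have hc1 : ∀ i j : Fin n, Continuous fun l : Fin n → ℝ => Real.log (exp (l i) + exp (l j)) := by
    intro i j
    have hcont : Continuous fun l : Fin n → ℝ => exp (l i) + exp (l j) :=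
      (Real.continuous_exp.comp (continuous_apply i)).add
        (Real.continuous_exp.comp (continuous_apply j))
    refine Real.continuousOn_log.comp_continuous hcont fun l => ?_
    simp only [Set.mem_compl_iff, Set.mem_singleton_iff]
    positivity
  have hGc : Continuous G := by
    exact ((continuous_finset_sum _ fun i _ => continuous_finset_sum _ fun j _ =>
      hc1 i j).div_const 2).sub
      (continuous_finset_sum _ fun i _ => continuous_const.mul (continuous_apply i))
  -- closed hyperplane
  have hH : IsClosed {l : Fin n → ℝ | ∑ i, l i = 0} :=
    isClosed_eq (continuous_finset_sum _ fun i _ => continuous_apply i) continuous_const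
  set R : ℝ := 2 / ε * (|G 0| + 1) with hRdef
  have hR : 0 ≤ R := by positivity
  set K : Set (Fin n → ℝ) := {l | ∑ i, l i = 0} ∩ Metric.closedBall 0 R with hKdef
  have hKc : IsCompact K := by
    refine (isCompact_closedBall (0 : Fin n → ℝ) R).of_isClosed_subset
      (hH.inter Metric.isClosed_closedBall) Set.inter_subset_right
  have h0K : (0 : Fin n → ℝ) ∈ K := ⟨by simp, Metric.mem_closedBall_self hR⟩
  obtain ⟨l0, hl0K, hmin⟩ := hKc.exists_isMinOn ⟨0, h0K⟩ hGc.continuousOn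
  have hl0sum : ∑ i, l0 i = 0 := hl0K.1
  have hglobal : ∀ l : Fin n → ℝ, ∑ i, l i = 0 → G l0 ≤ G l := by
    intro l hl
    by_cases hball : ‖l‖ ≤ R
    · exact hmin ⟨hl, by simpa [Metric.mem_closedBall, dist_zero_right] using hball⟩
    · push_neg at hball
      have hlb := Gfun_lb hn ε hε q hq1 hq0 l hl
      have h0 : G l0 ≤ G 0 := hmin h0K
      have hRε : ε / 2 * R = |G 0| + 1 := by
        rw [hRdef]; field_simp
      have : |G 0| + 1 ≤ ε / 2 * ‖l‖ := by
        rw [← hRε]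
        exact mul_le_mul_of_nonneg_left hball.le (by positivity)
      have habs : G 0 ≤ |G 0| := le_abs_self _
      rw [hGdef] at *
      linarith
  -- stationarity
  have hstat : ∀ v : Fin n → ℝ, ∑ i, v i = 0 →
      ∑ i, v i * btS l0 i = ∑ i, x i * v i := by
    intro v hv
    set ψ : ℝ → ℝ := fun t =>
      (∑ i, ∑ j ∈ Finset.univ.filter (fun j => j ≠ i),
        Real.log (exp (l0 i + t * v i) + exp (l0 j + t * v j))) / 2
        - ∑ i, x i * (l0 i + t * v i) with hψdef
    have hfun : ∀ t : ℝ, G (l0 + t • v) = ψ t := by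
      intro t
      rw [hGdef, Gfun, hψdef]
      simp [Pi.add_apply, Pi.smul_apply, smul_eq_mul]
    have hψmin : IsLocalMin ψ 0 := by
      have : IsMinOn ψ Set.univ 0 := by
        intro t _
        have hmem : ∑ i, (l0 + t • v) i = 0 := by
          simp only [Pi.add_apply, Pi.smul_apply, smul_eq_mul]
          rw [Finset.sum_add_distrib, hl0sum, ← Finset.mul_sum, hv]
          ring
        have hgl := hglobal _ hmem
        rw [hfun t] at hgl
        have h00 : ψ 0 = G l0 := by
          rw [← hfun 0]
          simp
        rw [h00]
        exact hgl
      exact this.isLocalMin Filter.univ_mem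
    have hA : ∀ k : Fin n, HasDerivAt (fun t : ℝ => exp (l0 k + t * v k))
        (exp (l0 k + 0 * v k) * (1 * v k)) 0 :=
      fun k => (((hasDerivAt_id (0:ℝ)).mul_const (v k)).const_add (l0 k)).exp
    have hlog : ∀ i j : Fin n, HasDerivAt
        (fun t : ℝ => Real.log (exp (l0 i + t * v i) + exp (l0 j + t * v j)))
        ((exp (l0 i + 0 * v i) * (1 * v i) + exp (l0 j + 0 * v j) * (1 * v j))
          / (exp (l0 i + 0 * v i) + exp (l0 j + 0 * v j))) 0 := by
      intro i j
      exact ((hA i).add (hA j)).log (add_pos (exp_pos _) (exp_pos _)).ne'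
    have hlin : HasDerivAt (fun t : ℝ => ∑ i, x i * (l0 i + t * v i))
        (∑ i, x i * (1 * v i)) 0 := by
      refine HasDerivAt.fun_sum fun i _ => ?_
      exact (((hasDerivAt_id (0:ℝ)).mul_const (v i)).const_add (l0 i)).const_mul (x i)
    have hψd : HasDerivAt ψ
        ((∑ i, ∑ j ∈ Finset.univ.filter (fun j => j ≠ i),
          (exp (l0 i + 0 * v i) * (1 * v i) + exp (l0 j + 0 * v j) * (1 * v j))
            / (exp (l0 i + 0 * v i) + exp (l0 j + 0 * v j))) / 2
          - ∑ i, x i * (1 * v i)) 0 := by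
      refine HasDerivAt.sub ?_ hlin
      exact (HasDerivAt.fun_sum fun i _ => HasDerivAt.fun_sum fun j _ => hlog i j).div_const 2
    have hD0 : (∑ i, ∑ j ∈ Finset.univ.filter (fun j => j ≠ i),
          (exp (l0 i + 0 * v i) * (1 * v i) + exp (l0 j + 0 * v j) * (1 * v j))
            / (exp (l0 i + 0 * v i) + exp (l0 j + 0 * v j))) / 2
          - ∑ i, x i * (1 * v i) = 0 := by
      rw [← hψd.deriv]
      exact hψmin.deriv_eq_zero
    -- simplify the derivative
    have hT : ∀ i j : Fin n,
        (exp (l0 i + 0 * v i) * (1 * v i) + exp (l0 j + 0 * v j) * (1 * v j))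
          / (exp (l0 i + 0 * v i) + exp (l0 j + 0 * v j))
        = v i * logisticL (l0 i - l0 j) + v j * logisticL (l0 j - l0 i) := by
      intro i j
      rw [logisticL_sub_eq, logisticL_sub_eq]
      have hi := exp_pos (l0 i); have hj := exp_pos (l0 j)
      simp only [zero_mul, add_zero, one_mul]
      field_simp
      ring
    have hsum1 : ∑ i, ∑ j ∈ Finset.univ.filter (fun j => j ≠ i),
          (exp (l0 i + 0 * v i) * (1 * v i) + exp (l0 j + 0 * v j) * (1 * v j))
            / (exp (l0 i + 0 * v i) + exp (l0 j + 0 * v j))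
        = (∑ i, v i * btS l0 i) * 2 := by
      have e1 : ∀ i, ∑ j ∈ Finset.univ.filter (fun j => j ≠ i),
          (v i * logisticL (l0 i - l0 j) + v j * logisticL (l0 j - l0 i))
          = (∑ j ∈ Finset.univ.filter (fun j => j ≠ i), v i * logisticL (l0 i - l0 j))
            + ∑ j ∈ Finset.univ.filter (fun j => j ≠ i), v j * logisticL (l0 j - l0 i) :=
        fun i => Finset.sum_add_distrib
      have hswap := sum_filter_swap (fun i j => v i * logisticL (l0 i - l0 j))
      calc ∑ i, ∑ j ∈ Finset.univ.filter (fun j => j ≠ i),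
          (exp (l0 i + 0 * v i) * (1 * v i) + exp (l0 j + 0 * v j) * (1 * v j))
            / (exp (l0 i + 0 * v i) + exp (l0 j + 0 * v j))
          = ∑ i, ∑ j ∈ Finset.univ.filter (fun j => j ≠ i),
            (v i * logisticL (l0 i - l0 j) + v j * logisticL (l0 j - l0 i)) := by
            exact Finset.sum_congr rfl fun i _ => Finset.sum_congr rfl fun j _ => hT i j
        _ = (∑ i, ∑ j ∈ Finset.univ.filter (fun j => j ≠ i), v i * logisticL (l0 i - l0 j))
            + ∑ i, ∑ j ∈ Finset.univ.filter (fun j => j ≠ i), v j * logisticL (l0 j - l0 i) := by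
            rw [← Finset.sum_add_distrib]
            exact Finset.sum_congr rfl fun i _ => e1 i
        _ = (∑ i, v i * btS l0 i) * 2 := by
            rw [← hswap]
            have : ∀ i, ∑ j ∈ Finset.univ.filter (fun j => j ≠ i), v i * logisticL (l0 i - l0 j)
                = v i * btS l0 i := fun i => (Finset.mul_sum _ _ _).symm
            rw [Finset.sum_congr rfl fun i _ => this i]
            ring
    rw [hsum1] at hD0
    have : ∀ i, x i * (1 * v i) = x i * v i := fun i => by ring
    rw [Finset.sum_congr rfl fun i _ => this i] at hD0
    linarith
  -- conclusion
  have hsum_eq : ∑ i, btS l0 i = ∑ i, x i := by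
    have hf : ∀ i j : Fin n, i ≠ j →
        logisticL (l0 i - l0 j) + logisticL (l0 j - l0 i) = 1 := by
      intro i j _
      have : l0 j - l0 i = -(l0 i - l0 j) := by ring
      rw [this]
      exact logisticL_add_neg _
    exact sum_scores_eq _ _ hf hq1
  have hv : ∑ i, (btS l0 i - x i) = 0 := by
    rw [Finset.sum_sub_distrib, hsum_eq]; ring
  have hzero := hstat (fun i => btS l0 i - x i) hv
  have hsq : ∑ i, (btS l0 i - x i) ^ 2 = 0 := by
    have : ∑ i, (btS l0 i - x i) ^ 2
        = ∑ i, (btS l0 i - x i) * btS l0 i - ∑ i, x i * (btS l0 i - x i) := by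
      rw [← Finset.sum_sub_distrib]
      exact Finset.sum_congr rfl fun i _ => by ring
    rw [this, hzero]; ring
  refine ⟨l0, fun i => ?_⟩
  have := (Finset.sum_eq_zero_iff_of_nonneg (fun i _ => sq_nonneg _)).mp hsq i (Finset.mem_univ i)
  have hxi : x i = btS l0 i := by
    have := pow_eq_zero_iff (n := 2) (by norm_num) |>.mp this
    linarith
  rw [hxdef] at hxi
  exact hxi.trans rfl


/-- Joe's theorem: the closure of the set of Bradley–Terry mean score
sequences is the set of all mean score sequences. -/
theorem joe_theorem (n : ℕ) (hn : 1 ≤ n) :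
    closure { x : Fin n → ℝ | ∃ lam : Fin n → ℝ, ∀ i,
        x i = ∑ j ∈ Finset.univ.filter (fun j => j ≠ i), logisticL (lam i - lam j) }
      = { x : Fin n → ℝ | ∃ p : Fin n → Fin n → ℝ,
            IsWinProbMatrix p ∧ ∀ i, x i = meanScore p i } := by
  set B : Set (Fin n → ℝ) := { x | ∃ lam : Fin n → ℝ, ∀ i,
      x i = ∑ j ∈ Finset.univ.filter (fun j => j ≠ i), logisticL (lam i - lam j) } with hB
  set M : Set (Fin n → ℝ) := { x | ∃ p : Fin n → Fin n → ℝ,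
      IsWinProbMatrix p ∧ ∀ i, x i = meanScore p i } with hM
  -- B ⊆ M
  have hBM : B ⊆ M := by
    rintro x ⟨lam, hlam⟩
    refine ⟨fun i j => if i = j then 1/2 else logisticL (lam i - lam j), ⟨?_, ?_⟩, ?_⟩
    · intro i j
      by_cases h : i = j
      · simp only [h, if_true, if_pos]
        norm_num
      · simp only [h, if_false]
        exact ⟨(logisticL_pos _).le, (logisticL_lt_one _).le⟩
    · intro i j hij
      have h' : ¬ j = i := fun h => hij h.symm
      simp only [hij, h', if_false]
      have h2 : lam j - lam i = -(lam i - lam j) := by ring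
      rw [h2]
      exact logisticL_add_neg _
    · intro i
      rw [hlam i, meanScore]
      refine Finset.sum_congr rfl fun j hj => ?_
      have h3 : ¬ i = j := fun h => (Finset.mem_filter.mp hj).2 h.symm
      simp [h3]
  -- M is closed
  have hMclosed : IsClosed M := by
    have hKc : IsCompact {p : Fin n → Fin n → ℝ | IsWinProbMatrix p} := by
      have hsub : {p : Fin n → Fin n → ℝ | IsWinProbMatrix p} ⊆
          Set.univ.pi (fun _ : Fin n => Set.univ.pi fun _ : Fin n => Set.Icc (0:ℝ) 1) := by
        intro p hp i _ 
        intro j _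
        exact ⟨(hp.1 i j).1, (hp.1 i j).2⟩
      have hcomp : IsCompact (Set.univ.pi (fun _ : Fin n =>
          Set.univ.pi fun _ : Fin n => Set.Icc (0:ℝ) 1)) :=
        isCompact_univ_pi fun _ => isCompact_univ_pi fun _ => isCompact_Icc
      refine hcomp.of_isClosed_subset ?_ hsub
      have h1 : IsClosed (⋂ i : Fin n, ⋂ j : Fin n,
          {p : Fin n → Fin n → ℝ | 0 ≤ p i j ∧ p i j ≤ 1}) := by
        refine isClosed_iInter fun i => isClosed_iInter fun j => ?_
        have hev : Continuous fun p : Fin n → Fin n → ℝ => p i j :=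
          (continuous_apply j).comp (continuous_apply i)
        exact (isClosed_le continuous_const hev).inter (isClosed_le hev continuous_const)
      have h2 : IsClosed (⋂ i : Fin n, ⋂ j : Fin n,
          {p : Fin n → Fin n → ℝ | i ≠ j → p i j + p j i = 1}) := by
        refine isClosed_iInter fun i => isClosed_iInter fun j => ?_
        by_cases h : i = j
        · subst h
          have he : {p : Fin n → Fin n → ℝ | i ≠ i → p i i + p i i = 1} = Set.univ := by
            ext p; simp
          rw [he]; exact isClosed_univ
        · have he : {p : Fin n → Fin n → ℝ | i ≠ j → p i j + p j i = 1}
              = {p : Fin n → Fin n → ℝ | p i j + p j i = 1} := by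
            ext p; simp [h]
          rw [he]
          exact isClosed_eq (((continuous_apply j).comp (continuous_apply i)).fun_add
            ((continuous_apply i).comp (continuous_apply j))) continuous_const
      have heq : {p : Fin n → Fin n → ℝ | IsWinProbMatrix p}
          = (⋂ i : Fin n, ⋂ j : Fin n, {p : Fin n → Fin n → ℝ | 0 ≤ p i j ∧ p i j ≤ 1})
            ∩ (⋂ i : Fin n, ⋂ j : Fin n, {p : Fin n → Fin n → ℝ | i ≠ j → p i j + p j i = 1}) := by
        ext p
        simp only [Set.mem_setOf_eq, Set.mem_inter_iff, Set.mem_iInter, IsWinProbMatrix]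
      rw [heq]
      exact h1.inter h2
    have hPhi : Continuous fun p : Fin n → Fin n → ℝ => (meanScore p : Fin n → ℝ) := by
      refine continuous_pi fun i => ?_
      exact continuous_finset_sum _ fun j _ => (continuous_apply j).comp (continuous_apply i)
    have himg : M = (fun p : Fin n → Fin n → ℝ => (meanScore p : Fin n → ℝ))
        '' {p | IsWinProbMatrix p} := by
      ext x
      constructor
      · rintro ⟨p, hp, hx⟩
        exact ⟨p, hp, funext fun i => (hx i).symm⟩
      · rintro ⟨p, hp, hx⟩
        exact ⟨p, hp, fun i => by rw [← hx]⟩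
    rw [himg]
    exact (hKc.image hPhi).isClosed
  -- M ⊆ closure B
  have hMB : M ⊆ closure B := by
    rintro x ⟨p, hp, hx⟩
    have hxb : ∀ i, 0 ≤ x i ∧ x i ≤ n := by
      intro i
      rw [hx i, meanScore]
      constructor
      · exact Finset.sum_nonneg fun j _ => (hp.1 i j).1
      · calc ∑ j ∈ Finset.univ.filter (fun j => j ≠ i), p i j
            ≤ ∑ j ∈ Finset.univ.filter (fun j => j ≠ i), (1:ℝ) :=
              Finset.sum_le_sum fun j _ => (hp.1 i j).2
          _ = (Finset.univ.filter (fun j => j ≠ i)).card := by rw [Finset.sum_const]; simp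
          _ ≤ n := by
              have hcf := Finset.card_filter_le (Finset.univ : Finset (Fin n)) (fun j => j ≠ i)
              simp only [Finset.card_univ, Fintype.card_fin] at hcf
              exact_mod_cast hcf
    rw [Metric.mem_closure_iff]
    intro δ hδ
    set ε : ℝ := min (1/2) (δ / (6 * (n + 1))) with hεdef
    have hε : 0 < ε := lt_min (by norm_num) (by positivity)
    have hε2 : ε ≤ 1/2 := min_le_left _ _
    have hεδ : ε ≤ δ / (6 * (n + 1)) := min_le_right _ _
    set q : Fin n → Fin n → ℝ := fun i j => (1 - 2 * ε) * p i j + ε with hqdef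
    have hq1 : ∀ i j, i ≠ j → q i j + q j i = 1 := by
      intro i j hij
      have h := hp.2 i j hij
      simp only [hqdef]
      nlinarith
    have hq0 : ∀ i j, i ≠ j → ε ≤ q i j := by
      intro i j hij
      have h1 := (hp.1 i j).1
      simp only [hqdef]
      nlinarith
    obtain ⟨lam, hlam⟩ := core hn ε hε q hq1 hq0
    refine ⟨fun i => meanScore q i, ⟨lam, fun i => hlam i⟩, ?_⟩
    have hqi : ∀ i, meanScore q i
        = (1 - 2 * ε) * x i + ε * (Finset.univ.filter (fun j => j ≠ i)).card := by
      intro i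
      have hc : ε * ((Finset.univ.filter (fun j => j ≠ i)).card : ℝ)
          = ∑ _j ∈ Finset.univ.filter (fun j => j ≠ i), ε := by
        rw [Finset.sum_const, nsmul_eq_mul]; ring
      rw [meanScore, hx i, meanScore, Finset.mul_sum, hc, ← Finset.sum_add_distrib]
    have hdist : ∀ i, dist (x i) (meanScore q i) ≤ δ / 2 := by
      intro i
      rw [Real.dist_eq, hqi i]
      have hcard : ((Finset.univ.filter (fun j => j ≠ i)).card : ℝ) ≤ n := by
        have hcf := Finset.card_filter_le (Finset.univ : Finset (Fin n)) (fun j => j ≠ i)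
        simp only [Finset.card_univ, Fintype.card_fin] at hcf
        exact_mod_cast hcf
      have hcard0 : (0:ℝ) ≤ ((Finset.univ.filter (fun j => j ≠ i)).card : ℝ) := Nat.cast_nonneg _
      have hxi := hxb i
      have habs : |x i - ((1 - 2 * ε) * x i
          + ε * ((Finset.univ.filter (fun j => j ≠ i)).card : ℝ))| ≤ 3 * ε * n := by
        rw [abs_le]
        constructor <;> nlinarith [hxi.1, hxi.2, hε.le]
      have hfinal : 3 * ε * n ≤ δ / 2 := by
        have h6 : (0:ℝ) < 6 * ((n:ℝ)+1) := by positivity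
        have hm := mul_le_mul_of_nonneg_right hεδ (by positivity : (0:ℝ) ≤ 3 * (n:ℝ))
        calc 3 * ε * (n:ℝ) = ε * (3 * (n:ℝ)) := by ring
          _ ≤ δ / (6 * ((n:ℝ) + 1)) * (3 * (n:ℝ)) := hm
          _ ≤ δ / 2 := by
              rw [div_mul_eq_mul_div, div_le_div_iff₀ h6 (by norm_num)]
              nlinarith [hδ.le]
      exact habs.trans hfinal
    have hd2 := (dist_pi_le_iff (by linarith : (0:ℝ) ≤ δ / 2)).mpr hdist
    calc dist x (fun i => meanScore q i) ≤ δ / 2 := hd2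
      _ < δ := by linarith
  exact le_antisymm (closure_minimal hBM hMclosed) hMB
end

section
/- Joe's SST lemma. Let n ≥ 1, let x : Fin n → ℝ be monotone increasing and majorized by (0,1,…,n−1), and let ψ : ℝ → ℝ be strictly convex on [0,1]. Suppose p* is a win-probability matrix of size n with mean score sequence x that minimizes ∑_{i ≠ j} ψ(p i j) over all win-probability matrices p of size n with mean score sequence x. Then p* has the SST property: there exists a permutation σ of Fin n such that for every j, the map i ↦ p* (σ i) (σ j) is monotone increasing in i on { i : σ i ≠ σ j }. -/
open Finset

namespace JoeSSTAux


variable {n : ℕ}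

lemma slide {ψ : ℝ → ℝ} (hψ : StrictConvexOn ℝ (Set.Icc 0 1) ψ) {a b ε : ℝ}
    (ha0 : 0 ≤ a) (hb1 : b ≤ 1) (hab : a < b) (hε : 0 < ε) (hεg : ε < b - a) :
    ψ (a + ε) + ψ (b - ε) < ψ a + ψ b := by
  have ha : a ∈ Set.Icc (0:ℝ) 1 := ⟨ha0, by linarith⟩
  have hb : b ∈ Set.Icc (0:ℝ) 1 := ⟨by linarith, hb1⟩
  have hba : 0 < b - a := by linarith
  set t := ε / (b - a) with ht
  have ht0 : 0 < t := div_pos hε hba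
  have ht1 : t < 1 := (div_lt_one hba).2 hεg
  have htba : t * (b - a) = ε := div_mul_cancel₀ ε hba.ne'
  have h1 : a + ε = (1 - t) * a + t * b := by rw [← htba]; ring
  have h2 : b - ε = t * a + (1 - t) * b := by rw [← htba]; ring
  have c1 := hψ.2 ha hb hab.ne (by linarith : (0:ℝ) < 1 - t) ht0 (by ring)
  have c2 := hψ.2 ha hb hab.ne ht0 (by linarith : (0:ℝ) < 1 - t) (by ring)
  simp only [smul_eq_mul] at c1 c2
  rw [← h1] at c1
  rw [← h2] at c2
  linarith

/-- Indicator of the entry `(u, v)`. -/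
def ind (u v a b : Fin n) : ℝ := if a = u ∧ b = v then 1 else 0

lemma ind_symm (u v a b : Fin n) : ind u v b a = ind v u a b := by
  simp [ind, and_comm]

lemma sum_ind (u v a : Fin n) (huv : u ≠ v) :
    ∑ b ∈ univ.filter (fun b => b ≠ a), ind u v a b = if a = u then 1 else 0 := by
  by_cases h : a = u
  · subst h
    rw [if_pos rfl]
    rw [Finset.sum_eq_single v]
    · simp [ind]
    · intro b _ hb; simp [ind, hb]
    · intro hv; exact absurd (by simp [Ne.symm huv]) hv
  · rw [if_neg h]
    exact Finset.sum_eq_zero fun b _ => by simp [ind, h]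

/-- The objective functional. -/
def obj (ψ : ℝ → ℝ) (p : Fin n → Fin n → ℝ) : ℝ :=
  ∑ i, ∑ j ∈ Finset.univ.filter (fun j => j ≠ i), ψ (p i j)

lemma obj_eq (ψ : ℝ → ℝ) (p : Fin n → Fin n → ℝ) :
    obj ψ p = ∑ e ∈ Finset.univ.offDiag, ψ (p e.1 e.2) := by
  rw [obj, show (Finset.univ.offDiag : Finset (Fin n × Fin n)) = (Finset.univ ×ˢ Finset.univ).filter
      (fun a : Fin n × Fin n => a.1 ≠ a.2) from by ext; simp, Finset.sum_filter, Finset.sum_product]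
  simp only [Finset.sum_filter]
  refine Finset.sum_congr rfl fun i _ => Finset.sum_congr rfl fun j _ => ?_
  simp only [ne_comm]

lemma perturb (ψ : ℝ → ℝ) (p q : Fin n → Fin n → ℝ) (s : Finset (Fin n × Fin n))
    (hs : s ⊆ Finset.univ.offDiag)
    (hagree : ∀ a b : Fin n, a ≠ b → (a, b) ∉ s → q a b = p a b) :
    obj ψ q = obj ψ p + ∑ e ∈ s, (ψ (q e.1 e.2) - ψ (p e.1 e.2)) := by
  rw [obj_eq, obj_eq]
  have key : ∑ e ∈ s, (ψ (q e.1 e.2) - ψ (p e.1 e.2))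
      = ∑ e ∈ Finset.univ.offDiag, (ψ (q e.1 e.2) - ψ (p e.1 e.2)) := by
    refine Finset.sum_subset hs fun e he hes => ?_
    rw [hagree e.1 e.2 (Finset.mem_offDiag.1 he).2.2 (by simpa using hes)]
    ring
  rw [key, ← Finset.sum_add_distrib]
  exact Finset.sum_congr rfl fun e _ => by ring

lemma exchange3 {ψ : ℝ → ℝ} (hψ : StrictConvexOn ℝ (Set.Icc 0 1) ψ)
    {p : Fin n → Fin n → ℝ} (hp : IsWinProbMatrix p)
    (hmin : ∀ q, IsWinProbMatrix q → (∀ a, meanScore q a = meanScore p a) →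
      obj ψ p ≤ obj ψ q)
    {i j k : Fin n} (hij : i ≠ j) (hjk : j ≠ k) (hik : i ≠ k)
    (hhalf : p i j < 1/2) : p i k ≤ p j k := by
  by_contra hcon
  push_neg at hcon
  have hji := hij.symm
  have hkj := hjk.symm
  have hki := hik.symm
  obtain ⟨hp01, hpsum⟩ := hp
  have sij := hpsum i j hij
  have sjk := hpsum j k hjk
  have sik := hpsum i k hik
  obtain ⟨b0ij, b1ij⟩ := hp01 i j
  obtain ⟨b0ji, b1ji⟩ := hp01 j i
  obtain ⟨b0jk, b1jk⟩ := hp01 j k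
  obtain ⟨b0ik, b1ik⟩ := hp01 i k
  obtain ⟨b0ki, b1ki⟩ := hp01 k i
  obtain ⟨b0kj, b1kj⟩ := hp01 k j
  set g0 : ℝ := p j i - p i j with hg0
  set g1 : ℝ := p i k - p j k with hg1
  have hg0pos : 0 < g0 := by rw [hg0]; linarith
  have hg1pos : 0 < g1 := by rw [hg1]; linarith
  set ε : ℝ := min g0 g1 / 2 with hε
  have hεpos : 0 < ε := by
    have := lt_min hg0pos hg1pos
    rw [hε]; linarith
  have hεg0 : ε < g0 := by
    have h := min_le_left g0 g1
    rw [hε]; linarith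
  have hεg1 : ε < g1 := by
    have h := min_le_right g0 g1
    rw [hε]; linarith
  -- the perturbed matrix
  set c : Fin n → Fin n → ℝ := fun a b =>
    ind i j a b + ind j k a b + ind k i a b - ind j i a b - ind k j a b - ind i k a b
    with hc
  set q : Fin n → Fin n → ℝ := fun a b => p a b + ε * c a b with hqdef
  have hcanti : ∀ a b, c a b + c b a = 0 := by
    intro a b
    simp only [hc]
    rw [ind_symm i j a b, ind_symm j k a b, ind_symm k i a b, ind_symm j i a b,
      ind_symm k j a b, ind_symm i k a b]
    ring
  -- values at the six special entries
  have vij : q i j = p i j + ε := by simp [hqdef, hc, ind, hij, hjk, hik, hji, hkj, hki]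
  have vji : q j i = p j i - ε := by simp [hqdef, hc, ind, hij, hjk, hik, hji, hkj, hki]; ring
  have vjk : q j k = p j k + ε := by simp [hqdef, hc, ind, hij, hjk, hik, hji, hkj, hki]
  have vkj : q k j = p k j - ε := by simp [hqdef, hc, ind, hij, hjk, hik, hji, hkj, hki]; ring
  have vki : q k i = p k i + ε := by simp [hqdef, hc, ind, hij, hjk, hik, hji, hkj, hki]
  have vik : q i k = p i k - ε := by simp [hqdef, hc, ind, hij, hjk, hik, hji, hkj, hki]; ring
  set s : Finset (Fin n × Fin n) :=
    {(i, j), (j, k), (k, i), (j, i), (k, j), (i, k)} with hs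
  have hagree : ∀ a b : Fin n, (a, b) ∉ s → q a b = p a b := by
    intro a b hab
    have hne : ∀ u v : Fin n, (u, v) ∈ s → ¬(a = u ∧ b = v) := by
      rintro u v hm ⟨rfl, rfl⟩; exact hab hm
    have hc0 : c a b = 0 := by
      simp only [hc, ind]
      rw [if_neg (hne i j (by simp [hs])), if_neg (hne j k (by simp [hs])),
        if_neg (hne k i (by simp [hs])), if_neg (hne j i (by simp [hs])),
        if_neg (hne k j (by simp [hs])), if_neg (hne i k (by simp [hs]))]
      ring
    simp [hqdef, hc0]
  have hqwin : IsWinProbMatrix q := by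
    constructor
    · intro a b
      by_cases h1 : a = i ∧ b = j
      · obtain ⟨rfl, rfl⟩ := h1; rw [vij]; constructor <;> [linarith; linarith]
      by_cases h2 : a = j ∧ b = i
      · obtain ⟨rfl, rfl⟩ := h2; rw [vji]; constructor <;> [linarith; linarith]
      by_cases h3 : a = j ∧ b = k
      · obtain ⟨rfl, rfl⟩ := h3; rw [vjk]; constructor <;> [linarith; linarith]
      by_cases h4 : a = k ∧ b = j
      · obtain ⟨rfl, rfl⟩ := h4; rw [vkj]; constructor <;> [linarith; linarith]
      by_cases h5 : a = k ∧ b = i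
      · obtain ⟨rfl, rfl⟩ := h5; rw [vki]; constructor <;> [linarith; linarith]
      by_cases h6 : a = i ∧ b = k
      · obtain ⟨rfl, rfl⟩ := h6; rw [vik]; constructor <;> [linarith; linarith]
      · have : (a, b) ∉ s := by
          simp only [hs, Finset.mem_insert, Finset.mem_singleton, Prod.mk.injEq]
          push_neg
          exact ⟨fun ha hb => h1 ⟨ha, hb⟩, fun ha hb => h3 ⟨ha, hb⟩,
            fun ha hb => h5 ⟨ha, hb⟩, fun ha hb => h2 ⟨ha, hb⟩,
            fun ha hb => h4 ⟨ha, hb⟩, fun ha hb => h6 ⟨ha, hb⟩⟩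
        rw [hagree a b this]; exact hp01 a b
    · intro a b hab
      have : q a b + q b a = p a b + p b a + ε * (c a b + c b a) := by
        simp [hqdef]; ring
      rw [this, hcanti, hpsum a b hab]; ring
  have hqscore : ∀ a, meanScore q a = meanScore p a := by
    intro a
    have : meanScore q a = meanScore p a + ε * ∑ b ∈ univ.filter (fun b => b ≠ a), c a b := by
      simp only [meanScore, hqdef]
      rw [Finset.sum_add_distrib, Finset.mul_sum]
    rw [this]
    have hsum0 : ∑ b ∈ univ.filter (fun b => b ≠ a), c a b = 0 := by
      simp only [hc]
      rw [show (fun b => ind i j a b + ind j k a b + ind k i a b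
          - ind j i a b - ind k j a b - ind i k a b)
          = fun b => (ind i j a b + ind j k a b + ind k i a b)
          - (ind j i a b + ind k j a b + ind i k a b) from funext fun b => by ring]
      rw [Finset.sum_sub_distrib, Finset.sum_add_distrib, Finset.sum_add_distrib,
        Finset.sum_add_distrib, Finset.sum_add_distrib,
        sum_ind i j a hij, sum_ind j k a hjk, sum_ind k i a hki,
        sum_ind j i a hji, sum_ind k j a hkj, sum_ind i k a hik]
      ring
    rw [hsum0]; ring
  -- objective strictly decreases
  have hsub : s ⊆ Finset.univ.offDiag := by
    intro e he
    simp only [hs, Finset.mem_insert, Finset.mem_singleton] at he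
    rcases he with rfl|rfl|rfl|rfl|rfl|rfl <;>
      simp [Finset.mem_offDiag, hij, hjk, hik, hji, hkj, hki]
  have hobj := perturb ψ p q s hsub (fun a b _ hnot => hagree a b hnot)
  have hsum : ∑ e ∈ s, (ψ (q e.1 e.2) - ψ (p e.1 e.2))
      = (ψ (q i j) - ψ (p i j)) + (ψ (q j k) - ψ (p j k)) + (ψ (q k i) - ψ (p k i))
        + (ψ (q j i) - ψ (p j i)) + (ψ (q k j) - ψ (p k j)) + (ψ (q i k) - ψ (p i k)) := by
    rw [hs]
    rw [Finset.sum_insert (by simp [Prod.ext_iff, hij, hjk, hik, hji, hkj, hki]),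
      Finset.sum_insert (by simp [Prod.ext_iff, hij, hjk, hik, hji, hkj, hki]),
      Finset.sum_insert (by simp [Prod.ext_iff, hij, hjk, hik, hji, hkj, hki]),
      Finset.sum_insert (by simp [Prod.ext_iff, hij, hjk, hik, hji, hkj, hki]),
      Finset.sum_insert (by simp [Prod.ext_iff, hij, hjk, hik, hji, hkj, hki]),
      Finset.sum_singleton]
    ring
  have slide1 : ψ (p i j + ε) + ψ (p j i - ε) < ψ (p i j) + ψ (p j i) :=
    slide hψ b0ij b1ji (by linarith) hεpos (by rw [hg0] at hεg0; linarith)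
  have slide2 : ψ (p j k + ε) + ψ (p i k - ε) < ψ (p j k) + ψ (p i k) :=
    slide hψ b0jk b1ik (by linarith) hεpos (by rw [hg1] at hεg1; linarith)
  have slide3 : ψ (p k i + ε) + ψ (p k j - ε) < ψ (p k i) + ψ (p k j) :=
    slide hψ b0ki b1kj (by linarith) hεpos (by linarith [hεg1])
  have : obj ψ q < obj ψ p := by
    rw [hobj, hsum, vij, vji, vjk, vkj, vki, vik]
    linarith
  exact absurd (hmin q hqwin hqscore) (by linarith)


lemma exchange4 {ψ : ℝ → ℝ} (hψ : StrictConvexOn ℝ (Set.Icc 0 1) ψ)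
    {p : Fin n → Fin n → ℝ} (hp : IsWinProbMatrix p)
    (hmin : ∀ q, IsWinProbMatrix q → (∀ a, meanScore q a = meanScore p a) →
      obj ψ p ≤ obj ψ q)
    {i j k l : Fin n} (hij : i ≠ j) (hik : i ≠ k) (hil : i ≠ l)
    (hjk : j ≠ k) (hjl : j ≠ l) (hkl : k ≠ l)
    (h1 : p j k < p i k) (h2 : p i l < p j l) : False := by
  have hji := hij.symm
  have hki := hik.symm
  have hli := hil.symm
  have hkj := hjk.symm
  have hlj := hjl.symm
  have hlk := hkl.symm
  obtain ⟨hp01, hpsum⟩ := hp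
  have sik := hpsum i k hik
  have sjk := hpsum j k hjk
  have sil := hpsum i l hil
  have sjl := hpsum j l hjl
  obtain ⟨b0ik, b1ik⟩ := hp01 i k
  obtain ⟨b0jk, b1jk⟩ := hp01 j k
  obtain ⟨b0il, b1il⟩ := hp01 i l
  obtain ⟨b0jl, b1jl⟩ := hp01 j l
  obtain ⟨b0ki, b1ki⟩ := hp01 k i
  obtain ⟨b0kj, b1kj⟩ := hp01 k j
  obtain ⟨b0li, b1li⟩ := hp01 l i
  obtain ⟨b0lj, b1lj⟩ := hp01 l j
  set g1 : ℝ := p i k - p j k with hg1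
  set g2 : ℝ := p j l - p i l with hg2
  have hg1pos : 0 < g1 := by rw [hg1]; linarith
  have hg2pos : 0 < g2 := by rw [hg2]; linarith
  set ε : ℝ := min g1 g2 / 2 with hε
  have hεpos : 0 < ε := by
    have := lt_min hg1pos hg2pos
    rw [hε]; linarith
  have hεg1 : ε < g1 := by
    have h := min_le_left g1 g2
    rw [hε]; linarith
  have hεg2 : ε < g2 := by
    have h := min_le_right g1 g2
    rw [hε]; linarith
  set c : Fin n → Fin n → ℝ := fun a b =>
    ind i l a b + ind l j a b + ind j k a b + ind k i a b
      - ind l i a b - ind j l a b - ind k j a b - ind i k a b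
    with hc
  set q : Fin n → Fin n → ℝ := fun a b => p a b + ε * c a b with hqdef
  have hcanti : ∀ a b, c a b + c b a = 0 := by
    intro a b
    simp only [hc]
    rw [ind_symm i l a b, ind_symm l j a b, ind_symm j k a b, ind_symm k i a b,
      ind_symm l i a b, ind_symm j l a b, ind_symm k j a b, ind_symm i k a b]
    ring
  have vil : q i l = p i l + ε := by
    simp [hqdef, hc, ind, hij, hik, hil, hjk, hjl, hkl, hji, hki, hli, hkj, hlj, hlk]
  have vli : q l i = p l i - ε := by
    simp [hqdef, hc, ind, hij, hik, hil, hjk, hjl, hkl, hji, hki, hli, hkj, hlj, hlk]; ring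
  have vlj : q l j = p l j + ε := by
    simp [hqdef, hc, ind, hij, hik, hil, hjk, hjl, hkl, hji, hki, hli, hkj, hlj, hlk]
  have vjl : q j l = p j l - ε := by
    simp [hqdef, hc, ind, hij, hik, hil, hjk, hjl, hkl, hji, hki, hli, hkj, hlj, hlk]; ring
  have vjk : q j k = p j k + ε := by
    simp [hqdef, hc, ind, hij, hik, hil, hjk, hjl, hkl, hji, hki, hli, hkj, hlj, hlk]
  have vkj : q k j = p k j - ε := by
    simp [hqdef, hc, ind, hij, hik, hil, hjk, hjl, hkl, hji, hki, hli, hkj, hlj, hlk]; ring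
  have vki : q k i = p k i + ε := by
    simp [hqdef, hc, ind, hij, hik, hil, hjk, hjl, hkl, hji, hki, hli, hkj, hlj, hlk]
  have vik : q i k = p i k - ε := by
    simp [hqdef, hc, ind, hij, hik, hil, hjk, hjl, hkl, hji, hki, hli, hkj, hlj, hlk]; ring
  set s : Finset (Fin n × Fin n) :=
    {(i, l), (l, j), (j, k), (k, i), (l, i), (j, l), (k, j), (i, k)} with hs
  have hagree : ∀ a b : Fin n, (a, b) ∉ s → q a b = p a b := by
    intro a b hab
    have hne : ∀ u v : Fin n, (u, v) ∈ s → ¬(a = u ∧ b = v) := by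
      rintro u v hm ⟨rfl, rfl⟩; exact hab hm
    have hc0 : c a b = 0 := by
      simp only [hc, ind]
      rw [if_neg (hne i l (by simp [hs])), if_neg (hne l j (by simp [hs])),
        if_neg (hne j k (by simp [hs])), if_neg (hne k i (by simp [hs])),
        if_neg (hne l i (by simp [hs])), if_neg (hne j l (by simp [hs])),
        if_neg (hne k j (by simp [hs])), if_neg (hne i k (by simp [hs]))]
      ring
    simp [hqdef, hc0]
  have hqwin : IsWinProbMatrix q := by
    constructor
    · intro a b
      by_cases e1 : a = i ∧ b = l
      · obtain ⟨rfl, rfl⟩ := e1; rw [vil]; constructor <;> [linarith; linarith]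
      by_cases e2 : a = l ∧ b = i
      · obtain ⟨rfl, rfl⟩ := e2; rw [vli]; constructor <;> [linarith; linarith]
      by_cases e3 : a = l ∧ b = j
      · obtain ⟨rfl, rfl⟩ := e3; rw [vlj]; constructor <;> [linarith; linarith]
      by_cases e4 : a = j ∧ b = l
      · obtain ⟨rfl, rfl⟩ := e4; rw [vjl]; constructor <;> [linarith; linarith]
      by_cases e5 : a = j ∧ b = k
      · obtain ⟨rfl, rfl⟩ := e5; rw [vjk]; constructor <;> [linarith; linarith]
      by_cases e6 : a = k ∧ b = j
      · obtain ⟨rfl, rfl⟩ := e6; rw [vkj]; constructor <;> [linarith; linarith]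
      by_cases e7 : a = k ∧ b = i
      · obtain ⟨rfl, rfl⟩ := e7; rw [vki]; constructor <;> [linarith; linarith]
      by_cases e8 : a = i ∧ b = k
      · obtain ⟨rfl, rfl⟩ := e8; rw [vik]; constructor <;> [linarith; linarith]
      · have : (a, b) ∉ s := by
          simp only [hs, Finset.mem_insert, Finset.mem_singleton, Prod.mk.injEq]
          push_neg
          exact ⟨fun ha hb => e1 ⟨ha, hb⟩, fun ha hb => e3 ⟨ha, hb⟩,
            fun ha hb => e5 ⟨ha, hb⟩, fun ha hb => e7 ⟨ha, hb⟩,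
            fun ha hb => e2 ⟨ha, hb⟩, fun ha hb => e4 ⟨ha, hb⟩,
            fun ha hb => e6 ⟨ha, hb⟩, fun ha hb => e8 ⟨ha, hb⟩⟩
        rw [hagree a b this]; exact hp01 a b
    · intro a b hab
      have : q a b + q b a = p a b + p b a + ε * (c a b + c b a) := by
        simp [hqdef]; ring
      rw [this, hcanti, hpsum a b hab]; ring
  have hqscore : ∀ a, meanScore q a = meanScore p a := by
    intro a
    have : meanScore q a = meanScore p a + ε * ∑ b ∈ univ.filter (fun b => b ≠ a), c a b := by
      simp only [meanScore, hqdef]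
      rw [Finset.sum_add_distrib, Finset.mul_sum]
    rw [this]
    have hsum0 : ∑ b ∈ univ.filter (fun b => b ≠ a), c a b = 0 := by
      simp only [hc]
      rw [show (fun b => ind i l a b + ind l j a b + ind j k a b + ind k i a b
          - ind l i a b - ind j l a b - ind k j a b - ind i k a b)
          = fun b => (ind i l a b + ind l j a b + ind j k a b + ind k i a b)
          - (ind l i a b + ind j l a b + ind k j a b + ind i k a b) from funext fun b => by ring]
      rw [Finset.sum_sub_distrib, Finset.sum_add_distrib, Finset.sum_add_distrib,
        Finset.sum_add_distrib, Finset.sum_add_distrib, Finset.sum_add_distrib,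
        Finset.sum_add_distrib,
        sum_ind i l a hil, sum_ind l j a hlj, sum_ind j k a hjk, sum_ind k i a hki,
        sum_ind l i a hli, sum_ind j l a hjl, sum_ind k j a hkj, sum_ind i k a hik]
      ring
    rw [hsum0]; ring
  have hsub : s ⊆ Finset.univ.offDiag := by
    intro e he
    simp only [hs, Finset.mem_insert, Finset.mem_singleton] at he
    rcases he with rfl|rfl|rfl|rfl|rfl|rfl|rfl|rfl <;>
      simp [Finset.mem_offDiag, hij, hik, hil, hjk, hjl, hkl, hji, hki, hli, hkj, hlj, hlk]
  have hobj := perturb ψ p q s hsub (fun a b _ hnot => hagree a b hnot)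
  have hsum : ∑ e ∈ s, (ψ (q e.1 e.2) - ψ (p e.1 e.2))
      = (ψ (q i l) - ψ (p i l)) + (ψ (q l j) - ψ (p l j)) + (ψ (q j k) - ψ (p j k))
        + (ψ (q k i) - ψ (p k i)) + (ψ (q l i) - ψ (p l i)) + (ψ (q j l) - ψ (p j l))
        + (ψ (q k j) - ψ (p k j)) + (ψ (q i k) - ψ (p i k)) := by
    rw [hs]
    rw [Finset.sum_insert (by simp [Prod.ext_iff, hij, hik, hil, hjk, hjl, hkl, hji, hki, hli, hkj, hlj, hlk]),
      Finset.sum_insert (by simp [Prod.ext_iff, hij, hik, hil, hjk, hjl, hkl, hji, hki, hli, hkj, hlj, hlk]),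
      Finset.sum_insert (by simp [Prod.ext_iff, hij, hik, hil, hjk, hjl, hkl, hji, hki, hli, hkj, hlj, hlk]),
      Finset.sum_insert (by simp [Prod.ext_iff, hij, hik, hil, hjk, hjl, hkl, hji, hki, hli, hkj, hlj, hlk]),
      Finset.sum_insert (by simp [Prod.ext_iff, hij, hik, hil, hjk, hjl, hkl, hji, hki, hli, hkj, hlj, hlk]),
      Finset.sum_insert (by simp [Prod.ext_iff, hij, hik, hil, hjk, hjl, hkl, hji, hki, hli, hkj, hlj, hlk]),
      Finset.sum_insert (by simp [Prod.ext_iff, hij, hik, hil, hjk, hjl, hkl, hji, hki, hli, hkj, hlj, hlk]),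
      Finset.sum_singleton]
    ring
  have slideA : ψ (p j k + ε) + ψ (p i k - ε) < ψ (p j k) + ψ (p i k) :=
    slide hψ b0jk b1ik (by linarith) hεpos (by rw [hg1] at hεg1; linarith)
  have slideB : ψ (p k i + ε) + ψ (p k j - ε) < ψ (p k i) + ψ (p k j) :=
    slide hψ b0ki b1kj (by linarith) hεpos (by linarith [hεg1])
  have slideC : ψ (p i l + ε) + ψ (p j l - ε) < ψ (p i l) + ψ (p j l) :=
    slide hψ b0il b1jl (by linarith) hεpos (by rw [hg2] at hεg2; linarith)
  have slideD : ψ (p l j + ε) + ψ (p l i - ε) < ψ (p l j) + ψ (p l i) :=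
    slide hψ b0lj b1li (by linarith) hεpos (by linarith [hεg2])
  have hlt : obj ψ q < obj ψ p := by
    rw [hobj, hsum, vil, vli, vlj, vjl, vjk, vkj, vki, vik]
    linarith
  exact absurd (hmin q hqwin hqscore) (by linarith)


end JoeSSTAux

open JoeSSTAux in
/-- Joe's SST lemma: a minimizer of a strictly convex off-diagonal functional
over win-probability matrices with a given (majorized) mean score sequence has
the strong stochastic transitivity property. -/
theorem joe_sst_lemma {n : ℕ} (hn : 1 ≤ n) (x : Fin n → ℝ) (hx : Monotone x)
    (hmaj : (∀ k : ℕ, 1 ≤ k → k ≤ n →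
        ((k * (k - 1) : ℕ) : ℝ) / 2 ≤
          ∑ i ∈ Finset.univ.filter (fun i : Fin n => (i : ℕ) < k), x i) ∧
      ∑ i, x i = ((n * (n - 1) : ℕ) : ℝ) / 2)
    (ψ : ℝ → ℝ) (hψ : StrictConvexOn ℝ (Set.Icc 0 1) ψ)
    (pstar : Fin n → Fin n → ℝ)
    (hpstar : IsWinProbMatrix pstar ∧ ∀ i, meanScore pstar i = x i)
    (hmin : ∀ p : Fin n → Fin n → ℝ,
      IsWinProbMatrix p → (∀ i, meanScore p i = x i) →
      ∑ i, ∑ j ∈ Finset.univ.filter (fun j => j ≠ i), ψ (pstar i j) ≤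
        ∑ i, ∑ j ∈ Finset.univ.filter (fun j => j ≠ i), ψ (p i j)) :
    ∃ σ : Equiv.Perm (Fin n), ∀ j,
      MonotoneOn (fun i => pstar (σ i) (σ j)) { i | σ i ≠ σ j } := by
  classical
  obtain ⟨hpwin, hpscore⟩ := hpstar
  have hmin' : ∀ q, IsWinProbMatrix q → (∀ a, meanScore q a = meanScore pstar a) →
      obj ψ pstar ≤ obj ψ q := fun q hq hqs =>
    hmin q hq (fun a => (hqs a).trans (hpscore a))
  have hpsum := hpwin.2
  have L1 : ∀ i j k : Fin n, i ≠ j → j ≠ k → i ≠ k → pstar i j < 1/2 →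
      pstar i k ≤ pstar j k := fun i j k hij hjk hik hh =>
    JoeSSTAux.exchange3 hψ hpwin hmin' hij hjk hik hh
  have L2 : ∀ i j k l : Fin n, i ≠ j → i ≠ k → i ≠ l → j ≠ k → j ≠ l → k ≠ l →
      pstar j k < pstar i k → pstar i l < pstar j l → False :=
    fun i j k l hij hik hil hjk hjl hkl h1 h2 =>
    JoeSSTAux.exchange4 hψ hpwin hmin' hij hik hil hjk hjl hkl h1 h2
  -- the SST preorder
  set Rel : Fin n → Fin n → Prop := fun a b =>
    a = b ∨ (pstar a b ≤ 1/2 ∧ ∀ k, k ≠ a → k ≠ b → pstar a k ≤ pstar b k) with hRel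
  have Rtotal : ∀ a b, Rel a b ∨ Rel b a := by
    intro a b
    by_cases hab : a = b
    · exact Or.inl (Or.inl hab)
    have hsum := hpsum a b hab
    rcases lt_trichotomy (pstar a b) (1/2) with h | h | h
    · exact Or.inl (Or.inr ⟨h.le, fun k hka hkb =>
        L1 a b k hab (Ne.symm hkb) (Ne.symm hka) h⟩)
    · by_cases hrow : ∀ k, k ≠ a → k ≠ b → pstar a k ≤ pstar b k
      · exact Or.inl (Or.inr ⟨le_of_eq h, hrow⟩)
      · push_neg at hrow
        obtain ⟨k, hka, hkb, hk⟩ := hrow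
        refine Or.inr (Or.inr ⟨by linarith, fun l hlb hla => ?_⟩)
        by_cases hlk : l = k
        · subst hlk; exact hk.le
        · by_contra hcon
          push_neg at hcon
          exact L2 a b k l hab (Ne.symm hka) (Ne.symm hla) (Ne.symm hkb)
            (Ne.symm hlb) (Ne.symm hlk) hk hcon
    · refine Or.inr (Or.inr ⟨by linarith, fun k hkb hka => ?_⟩)
      have : pstar b a < 1/2 := by linarith
      exact L1 b a k (Ne.symm hab) (Ne.symm hka) (Ne.symm hkb) this
  have Rtrans : ∀ a b c : Fin n, Rel a b → Rel b c → Rel a c := by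
    intro a b c hab hbc
    by_cases h1 : a = b
    · subst h1; exact hbc
    by_cases h2 : b = c
    · subst h2; exact hab
    by_cases h3 : a = c
    · exact Or.inl h3
    obtain ⟨hab1, hab2⟩ := hab.resolve_left h1
    obtain ⟨hbc1, hbc2⟩ := hbc.resolve_left h2
    refine Or.inr ⟨?_, fun k hka hkc => ?_⟩
    · have := hab2 c (Ne.symm h3) (Ne.symm h2)
      linarith
    · by_cases hkb : k = b
      · subst hkb
        have hs := hpsum k c h2
        have hs2 := hpsum c k (Ne.symm h2)
        linarith [hab1, hbc1]
      · exact le_trans (hab2 k hka hkb) (hbc2 k hkb hkc)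
  have Rrefl : ∀ a, Rel a a := fun a => Or.inl rfl
  -- total order refining Rel
  set r : Fin n → Fin n → Prop := fun a b => Rel a b ∧ (Rel b a → a ≤ b) with hr
  letI : DecidableRel r := fun a b => Classical.dec _
  haveI : IsTotal (Fin n) r := ⟨by
    intro a b
    rcases Rtotal a b with h | h
    · by_cases h' : Rel b a
      · rcases le_total a b with hle | hle
        · exact Or.inl ⟨h, fun _ => hle⟩
        · exact Or.inr ⟨h', fun _ => hle⟩
      · exact Or.inl ⟨h, fun hc => absurd hc h'⟩
    · by_cases h' : Rel a b
      · rcases le_total a b with hle | hle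
        · exact Or.inl ⟨h', fun _ => hle⟩
        · exact Or.inr ⟨h, fun _ => hle⟩
      · exact Or.inr ⟨h, fun hc => absurd hc h'⟩⟩
  haveI : IsTrans (Fin n) r := ⟨by
    intro a b c hab hbc
    refine ⟨Rtrans a b c hab.1 hbc.1, fun hca => ?_⟩
    have hba : Rel b a := Rtrans b c a hbc.1 hca
    have hcb : Rel c b := Rtrans c a b hca hab.1
    exact le_trans (hab.2 hba) (hbc.2 hcb)⟩
  haveI : IsAntisymm (Fin n) r := ⟨by
    intro a b hab hba
    exact le_antisymm (hab.2 hba.1) (hba.2 hab.1)⟩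
  set L : List (Fin n) := Finset.sort Finset.univ r with hL
  have hlen : L.length = n := by
    rw [hL, Finset.length_sort, Finset.card_univ, Fintype.card_fin]
  have hnodup : L.Nodup := Finset.sort_nodup Finset.univ r
  have hmem : ∀ a : Fin n, a ∈ L := fun a => (Finset.mem_sort r).2 (Finset.mem_univ a)
  set σ' : Fin L.length ≃ Fin n := hnodup.getEquivOfForallMemList L hmem with hσ'
  set σ : Equiv.Perm (Fin n) := (finCongr hlen.symm).trans σ' with hσ
  have happ : ∀ i : Fin n, σ i = L.get (finCongr hlen.symm i) := fun i => rfl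
  refine ⟨σ, fun j => ?_⟩
  intro i1 h1 i2 h2 hle
  rcases eq_or_lt_of_le hle with rfl | hlt
  · exact le_rfl
  have hsorted : List.Pairwise r L := Finset.pairwise_sort Finset.univ r
  have hrel : r (σ i1) (σ i2) := by
    rw [happ, happ]
    exact hsorted.rel_get_of_lt (by simpa using hlt)
  rcases hrel.1 with heq | ⟨_, hrow⟩
  · simp only [heq]; exact le_rfl
  · exact hrow (σ j) (Ne.symm h1) (Ne.symm h2)
end
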